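/- arXiv:1310.2225 — 6 statements merged into one kernel-verified Lean document; each statement's English description precedes it below -/
import Mathlib

section
/- Let $F \in \mathbb{R}[[X,Y_1,\dots,Y_n]]$ be a convergent power series (i.e., with positive radius of convergence). Then the divided-difference series $B_1,\dots,B_n \in \mathbb{R}[[X,Y,Z]]$ satisfying $F(X,Y)-F(X,Z) = \sum_i B_i(X,Y,Z)(Y_i-Z_i)$ and $B_i(X,Y,Y)=\partial F/\partial Y_i(X,Y)$ can be chosen to be convergent as well. -/
open Classical in
/-- Substitution of multivariate power series (intended for series with zero constant
term, such as variables) for the variables of a multivariate power series. -/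
noncomputable def mvSubst {σ τ : Type*} [Fintype σ] (a : σ → MvPowerSeries τ ℝ)
    (F : MvPowerSeries σ ℝ) : MvPowerSeries τ ℝ :=
  fun e => ∑ d ∈ Finset.Iic (Finsupp.equivFunOnFinite.symm fun _ : σ => e.sum fun _ k => k),
    MvPowerSeries.coeff d F * MvPowerSeries.coeff e (∏ s, (a s) ^ (d s))

/-- Formal partial derivative of a multivariate power series with respect to `i`. -/
noncomputable def mvPderiv {σ : Type*} (i : σ) (F : MvPowerSeries σ ℝ) :
    MvPowerSeries σ ℝ :=
  fun d => ((d i : ℝ) + 1) * MvPowerSeries.coeff (d + Finsupp.single i 1) F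

/-- A multivariate power series is convergent if it converges absolutely on some
polydisc around the origin. -/
def MvConvergent {σ : Type*} (F : MvPowerSeries σ ℝ) : Prop :=
  ∃ r : ℝ, 0 < r ∧
    Summable fun d : σ →₀ ℕ => |MvPowerSeries.coeff d F| * r ^ (d.sum fun _ k => k)

/-!
Variables are encoded as `Sum.inl x` for `X`, `Y_j = .inr (.inl j)` and `Z_j = .inr (.inr j)`.
Let `F_m := F(X, Z_0, …, Z_{m-1}, Y_m, …, Y_{n-1})` (substitution along `switchVars m`), so that
`F_0 = F(X, Y)` and `F_n = F(X, Z)`. Take for `B_i` the series whose coefficient at a monomial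
in `X`, `Z_j` (`j < i`), `Y_i`, `Z_i`, `Y_j` (`j > i`) is the coefficient of `F` at the monomial
obtained by setting `Z = Y` and raising the `Y_i`-degree by one, and zero elsewhere. Since
`y^(a+1) - z^(a+1) = (y - z) ∑_{k+l=a} y^k z^l`, we get `B_i (Y_i - Z_i) = F_i - F_{i+1}`, and the
sum over `i` telescopes. On the diagonal `Y = Z` each monomial with `Y_i`-degree `a` receives
`a + 1` equal contributions, which is `∂F/∂Y_i`. Finally, an exponent `e` of `B_i` is determined
by the exponent of `F` it reads and by `e(Z_i) ≤ |e|`, so at radius `r/2` the majorant of `B_i`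
is dominated by `∑_{d,k} |F_d| r^|d| r⁻¹ 2^(-k)`.
-/

open MvPowerSeries Finsupp Function

section Rename

variable {σ τ : Type*} [Fintype σ]

open Classical in
lemma mem_Iic_of_mapDomain_eq (f : σ → τ) {d : σ →₀ ℕ} {e : τ →₀ ℕ}
    (h : mapDomain f d = e) :
    d ∈ Finset.Iic (equivFunOnFinite.symm fun _ : σ => e.sum fun _ k => k) := by
  rw [Finset.mem_Iic, Finsupp.le_def]
  intro s
  have hdeg : degree d = degree e := by rw [← h, degree_mapDomain]
  exact (le_degree s d).trans_eq hdeg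

open Classical in
lemma coeff_mvSubst_X [DecidableEq τ] (f : σ → τ) (F : MvPowerSeries σ ℝ)
    (e : τ →₀ ℕ) :
    coeff e (mvSubst (fun v => X (f v)) F)
      = ∑ d ∈ Finset.Iic (equivFunOnFinite.symm fun _ : σ => e.sum fun _ k => k)
          with mapDomain f d = e, coeff d F := by
  refine Eq.trans (Finset.sum_congr rfl fun d _ => ?_) (Finset.sum_filter _ _).symm
  have hmono : ∏ s, (X (f s) : MvPowerSeries τ ℝ) ^ d s = monomial (mapDomain f d) 1 := by
    simp_rw [X_pow_eq, prod_monomial, Finset.prod_const_one]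
    rw [mapDomain, Finsupp.sum_fintype _ _ fun _ => single_zero _]
  rw [hmono, coeff_monomial]
  by_cases h : mapDomain f d = e
  · simp [h]
  · simp [h, Ne.symm h]

open Classical in
lemma coeff_mvSubst_X_of_leftInverse {f : σ → τ} {g : τ → σ} (hgf : LeftInverse g f)
    (F : MvPowerSeries σ ℝ) (e : τ →₀ ℕ) :
    coeff e (mvSubst (fun v => X (f v)) F)
      = if ∀ t ∉ Set.range f, e t = 0 then coeff (mapDomain g e) F else 0 := by
  classical
  have hfib : ∀ d, mapDomain f d = e → d = mapDomain g e := fun d h => by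
    rw [← h, ← mapDomain_comp, hgf.comp_eq_id, mapDomain_id]
  rw [coeff_mvSubst_X]
  split_ifs with he
  · have hsec : mapDomain f (mapDomain g e) = e := by
      rw [← mapDomain_comp]
      refine (mapDomain_congr fun t ht => ?_).trans mapDomain_id
      obtain ⟨s, rfl⟩ : t ∈ Set.range f := by
        by_contra hr; exact mem_support_iff.mp ht (he t hr)
      simp [hgf s]
    refine Finset.sum_eq_single_of_mem _
      (Finset.mem_filter.mpr ⟨mem_Iic_of_mapDomain_eq f hsec, hsec⟩) fun d hd hne => ?_
    exact absurd (hfib d (Finset.mem_filter.mp hd).2) hne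
  · refine Finset.sum_eq_zero fun d hd => ?_
    obtain rfl := (Finset.mem_filter.mp hd).2
    push Not at he
    obtain ⟨t, ht, hne⟩ := he
    exact absurd (mapDomain_of_notMem_range _ _ ht) hne

end Rename

section DividedDifference

variable {α : Type*} {n : ℕ}

abbrev mergeYZ : α ⊕ Fin n ⊕ Fin n → α ⊕ Fin n := Sum.map id (Sum.elim id id)

lemma mapDomain_mergeYZ_inl [Fintype α] (d : α ⊕ Fin n ⊕ Fin n →₀ ℕ) (x : α) :
    mapDomain mergeYZ d (.inl x) = d (.inl x) := by
  classical
  rw [mapDomain, Finsupp.sum_fintype _ _ fun _ => single_zero _]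
  simp [Fintype.sum_sum_type, single_apply]

lemma mapDomain_mergeYZ_inr [Fintype α] (d : α ⊕ Fin n ⊕ Fin n →₀ ℕ) (j : Fin n) :
    mapDomain mergeYZ d (.inr j) = d (.inr (.inl j)) + d (.inr (.inr j)) := by
  classical
  rw [mapDomain, Finsupp.sum_fintype _ _ fun _ => single_zero _]
  simp [Fintype.sum_sum_type, single_apply]

def switchVars (m : ℕ) : α ⊕ Fin n → α ⊕ Fin n ⊕ Fin n :=
  Sum.map id fun j => if (j : ℕ) < m then .inr j else .inl j

lemma leftInverse_mergeYZ_switchVars (m : ℕ) :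
    LeftInverse (mergeYZ (α := α) (n := n)) (switchVars m) := by
  rintro (x | j)
  · rfl
  · by_cases h : (j : ℕ) < m <;> simp [switchVars, h]

lemma forall_notMem_range_switchVars_iff (m : ℕ) (e : α ⊕ Fin n ⊕ Fin n →₀ ℕ) :
    (∀ t ∉ Set.range (switchVars m), e t = 0) ↔
      (∀ j : Fin n, (j : ℕ) < m → e (.inr (.inl j)) = 0) ∧
        (∀ j : Fin n, m ≤ j → e (.inr (.inr j)) = 0) := by
  constructor
  · intro h
    refine ⟨fun j hj => h _ ?_, fun j hj => h _ ?_⟩ <;>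
    · rintro ⟨x | k, hk⟩ <;>
        simp only [switchVars, Sum.map_inl, Sum.map_inr, reduceCtorEq] at hk
      split_ifs at hk with hkm <;> simp only [Sum.inl.injEq, Sum.inr.injEq, reduceCtorEq] at hk
      subst hk; omega
  · rintro ⟨hY, hZ⟩ (x | j | j) ht
    · exact absurd ⟨.inl x, rfl⟩ ht
    · by_cases hj : (j : ℕ) < m
      · exact hY j hj
      · exact absurd ⟨.inr j, by simp [switchVars, hj]⟩ ht
    · by_cases hj : (j : ℕ) < m
      · exact absurd ⟨.inr j, by simp [switchVars, hj]⟩ ht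
      · exact hZ j (not_lt.mp hj)

def IsDivDiffExponent (i : Fin n) (e : α ⊕ Fin n ⊕ Fin n →₀ ℕ) : Prop :=
  (∀ j < i, e (.inr (.inl j)) = 0) ∧ ∀ j, i < j → e (.inr (.inr j)) = 0

lemma isDivDiffExponent_congr {i : Fin n} {d d' : α ⊕ Fin n ⊕ Fin n →₀ ℕ}
    (h : ∀ t, t ≠ .inr (.inl i) → t ≠ .inr (.inr i) → d t = d' t) :
    IsDivDiffExponent i d ↔ IsDivDiffExponent i d' := by
  have hY : ∀ j < i, d (.inr (.inl j)) = d' (.inr (.inl j)) := fun j hj =>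
    h _ (by simp [hj.ne]) (by simp)
  have hZ : ∀ j, i < j → d (.inr (.inr j)) = d' (.inr (.inr j)) := fun j hj =>
    h _ (by simp) (by simp [hj.ne'])
  exact and_congr (forall₂_congr fun j hj => by rw [hY j hj])
    (forall₂_congr fun j hj => by rw [hZ j hj])

lemma forall_notMem_range_switchVars_self_iff (i : Fin n) (e : α ⊕ Fin n ⊕ Fin n →₀ ℕ) :
    (∀ t ∉ Set.range (switchVars i), e t = 0) ↔
      IsDivDiffExponent i e ∧ e (.inr (.inr i)) = 0 := by
  rw [forall_notMem_range_switchVars_iff, IsDivDiffExponent]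
  constructor
  · rintro ⟨hY, hZ⟩
    exact ⟨⟨fun j hj => hY j hj, fun j hj => hZ j hj.le⟩, hZ i le_rfl⟩
  · rintro ⟨⟨hY, hZ⟩, hi⟩
    refine ⟨fun j hj => hY j hj, fun j hj => ?_⟩
    rcases (Fin.le_iff_val_le_val.mpr hj).eq_or_lt with rfl | hlt
    · exact hi
    · exact hZ j hlt

lemma forall_notMem_range_switchVars_succ_iff (i : Fin n) (e : α ⊕ Fin n ⊕ Fin n →₀ ℕ) :
    (∀ t ∉ Set.range (switchVars (i + 1)), e t = 0) ↔
      IsDivDiffExponent i e ∧ e (.inr (.inl i)) = 0 := by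
  rw [forall_notMem_range_switchVars_iff, IsDivDiffExponent]
  constructor
  · rintro ⟨hY, hZ⟩
    exact ⟨⟨fun j hj => hY j (by omega), fun j hj => hZ j hj⟩, hY i (by omega)⟩
  · rintro ⟨⟨hY, hZ⟩, hi⟩
    refine ⟨fun j hj => ?_, fun j hj => hZ j hj⟩
    rcases (Nat.lt_succ_iff.mp hj).eq_or_lt with hji | hlt
    · exact Fin.ext hji ▸ hi
    · exact hY j hlt

open Classical in
noncomputable def divDiff (F : MvPowerSeries (α ⊕ Fin n) ℝ) (i : Fin n) :
    MvPowerSeries (α ⊕ Fin n ⊕ Fin n) ℝ :=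
  fun e => if IsDivDiffExponent i e then coeff (mapDomain mergeYZ e + single (.inr i) 1) F else 0

open Classical in
lemma coeff_divDiff (F : MvPowerSeries (α ⊕ Fin n) ℝ) (i : Fin n)
    (e : α ⊕ Fin n ⊕ Fin n →₀ ℕ) :
    coeff e (divDiff F i) =
      if IsDivDiffExponent i e then coeff (mapDomain mergeYZ e + single (.inr i) 1) F else 0 :=
  rfl

open Classical in
lemma coeff_divDiff_mul_X (F : MvPowerSeries (α ⊕ Fin n) ℝ) {i : Fin n}
    {t : α ⊕ Fin n ⊕ Fin n} (ht : t = .inr (.inl i) ∨ t = .inr (.inr i))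
    (e : α ⊕ Fin n ⊕ Fin n →₀ ℕ) :
    coeff e (divDiff F i * X t) =
      if IsDivDiffExponent i e ∧ e t ≠ 0 then coeff (mapDomain mergeYZ e) F else 0 := by
  have hle : single t 1 ≤ e ↔ e t ≠ 0 := by rw [single_le_iff, Nat.one_le_iff_ne_zero]
  rw [X, coeff_mul_monomial, mul_one]
  by_cases het : e t = 0
  · simp [hle, het]
  have hvalid : IsDivDiffExponent i (e - single t 1) ↔ IsDivDiffExponent i e :=
    isDivDiffExponent_congr fun s hsY hsZ => by
      have hts : t ≠ s := by rcases ht with rfl | rfl; exacts [hsY.symm, hsZ.symm]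
      simp [hts]
  have hmerge : mapDomain mergeYZ (e - single t 1) + single (.inr i) 1 = mapDomain mergeYZ e := by
    have hti : mergeYZ t = .inr i := by rcases ht with rfl | rfl <;> rfl
    conv_rhs => rw [← tsub_add_cancel_of_le (single_le_iff.mpr (Nat.one_le_iff_ne_zero.mpr het))]
    rw [mapDomain_add, mapDomain_single, hti]
  simp [coeff_divDiff, hle, het, hvalid, hmerge]

lemma divDiff_mul_sub [Fintype α] (F : MvPowerSeries (α ⊕ Fin n) ℝ) (i : Fin n) :
    divDiff F i * (X (.inr (.inl i)) - X (.inr (.inr i)))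
      = mvSubst (fun v => X (switchVars i v)) F
        - mvSubst (fun v => X (switchVars ((i : ℕ) + 1) v)) F := by
  ext e
  rw [mul_sub, map_sub, map_sub, coeff_divDiff_mul_X F (.inl rfl),
    coeff_divDiff_mul_X F (.inr rfl),
    coeff_mvSubst_X_of_leftInverse (leftInverse_mergeYZ_switchVars _),
    coeff_mvSubst_X_of_leftInverse (leftInverse_mergeYZ_switchVars _),
    forall_notMem_range_switchVars_self_iff, forall_notMem_range_switchVars_succ_iff]
  by_cases he : IsDivDiffExponent i e
  · by_cases hY : e (.inr (.inl i)) = 0 <;> by_cases hZ : e (.inr (.inr i)) = 0 <;>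
      simp [he, hY, hZ]
  · simp [he]

lemma sub_eq_sum_divDiff_mul [Fintype α] (F : MvPowerSeries (α ⊕ Fin n) ℝ) :
    mvSubst (fun v => X (Sum.map id Sum.inl v)) F
        - mvSubst (fun v => X (Sum.map id (Sum.inr : Fin n → Fin n ⊕ Fin n) v)) F
      = ∑ i, divDiff F i * (X (.inr (.inl i)) - X (.inr (.inr i))) := by
  have h₀ : switchVars (α := α) (n := n) 0 = Sum.map id Sum.inl := by
    funext v; rcases v with x | j <;> simp [switchVars]
  have hn : switchVars (α := α) (n := n) n = Sum.map id Sum.inr := by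
    funext v; rcases v with x | j <;> simp [switchVars]
  simp_rw [divDiff_mul_sub, ← h₀, ← hn]
  exact (Finset.sum_range_sub' (fun m => mvSubst (fun v => X (switchVars m v)) F) n).symm.trans
    (Fin.sum_univ_eq_sum_range (fun m => _ - _) n).symm

lemma eq_of_isDivDiffExponent [Fintype α] {i : Fin n} {d d' : α ⊕ Fin n ⊕ Fin n →₀ ℕ}
    (hd : IsDivDiffExponent i d) (hd' : IsDivDiffExponent i d')
    (hmerge : mapDomain mergeYZ d = mapDomain mergeYZ d')
    (hZ : d (.inr (.inr i)) = d' (.inr (.inr i))) : d = d' := by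
  have hsum : ∀ j,
      d (.inr (.inl j)) + d (.inr (.inr j)) = d' (.inr (.inl j)) + d' (.inr (.inr j)) :=
    fun j => by simpa only [mapDomain_mergeYZ_inr] using DFunLike.congr_fun hmerge (.inr j)
  ext (x | j | j)
  · simpa only [mapDomain_mergeYZ_inl] using DFunLike.congr_fun hmerge (.inl x)
  all_goals
    have := hsum j
    rcases lt_trichotomy j i with h | rfl | h
  · rw [hd.1 j h, hd'.1 j h]
  · omega
  · have := hd.2 j h; have := hd'.2 j h; omega
  · have := hd.1 j h; have := hd'.1 j h; omega
  · exact hZ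
  · rw [hd.2 j h, hd'.2 j h]

lemma exists_isDivDiffExponent_mapDomain_mergeYZ_eq [Fintype α] (i : Fin n)
    (e : α ⊕ Fin n →₀ ℕ) {k : ℕ} (hk : k ≤ e (.inr i)) :
    ∃ d, IsDivDiffExponent i d ∧ mapDomain mergeYZ d = e ∧ d (.inr (.inr i)) = k := by
  classical
  set A := mapDomain (switchVars i) e
  have hA := (forall_notMem_range_switchVars_self_iff i A).mp
    fun t ht => mapDomain_of_notMem_range _ _ ht
  have hAY : A (.inr (.inl i)) = e (.inr i) := by
    have : switchVars (α := α) i (.inr i) = .inr (.inl i) := by simp [switchVars]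
    rw [← this, mapDomain_apply (leftInverse_mergeYZ_switchVars _).injective]
  refine ⟨A - single (.inr (.inl i)) k + single (.inr (.inr i)) k, ?_, ?_, ?_⟩
  · refine (isDivDiffExponent_congr fun t hY hZ => ?_).mpr hA.1
    simp [hY.symm, hZ.symm]
  · have hle : single (.inr (.inl i)) k ≤ A := single_le_iff.mpr (hAY ▸ hk)
    calc mapDomain mergeYZ (A - single (.inr (.inl i)) k + single (.inr (.inr i)) k)
        = mapDomain mergeYZ (A - single (.inr (.inl i)) k + single (.inr (.inl i)) k) := by
          simp only [mapDomain_add, mapDomain_single]; rfl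
      _ = e := by
          rw [tsub_add_cancel_of_le hle, ← mapDomain_comp,
            (leftInverse_mergeYZ_switchVars _).comp_eq_id, mapDomain_id]
  · simp [hA.2]

lemma card_filter_isDivDiffExponent [Fintype α] (i : Fin n) (e : α ⊕ Fin n →₀ ℕ)
    {s : Finset (α ⊕ Fin n ⊕ Fin n →₀ ℕ)} (hs : ∀ d, mapDomain mergeYZ d = e → d ∈ s)
    [DecidablePred fun d => mapDomain mergeYZ d = e ∧ IsDivDiffExponent i d] :
    (s.filter fun d => mapDomain mergeYZ d = e ∧ IsDivDiffExponent i d).card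
      = e (.inr i) + 1 := by
  set S := s.filter fun d => mapDomain mergeYZ d = e ∧ IsDivDiffExponent i d
  have hinj : Set.InjOn (fun d : α ⊕ Fin n ⊕ Fin n →₀ ℕ => d (.inr (.inr i))) S := by
    intro d hd d' hd' h
    rw [Finset.coe_filter] at hd hd'
    exact eq_of_isDivDiffExponent hd.2.2 hd'.2.2 (hd.2.1.trans hd'.2.1.symm) h
  have himage : S.image (fun d => d (.inr (.inr i))) = Finset.range (e (.inr i) + 1) := by
    ext k
    simp only [S, Finset.mem_image, Finset.mem_filter, Finset.mem_range]
    constructor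
    · rintro ⟨d, ⟨-, rfl, -⟩, rfl⟩
      rw [mapDomain_mergeYZ_inr]
      omega
    · intro hk
      obtain ⟨d, hd, hde, hdk⟩ :=
        exists_isDivDiffExponent_mapDomain_mergeYZ_eq i e (k := k) (by omega)
      exact ⟨d, ⟨hs d hde, hde, hd⟩, hdk⟩
  rw [← Finset.card_image_of_injOn hinj, himage, Finset.card_range]

lemma mvSubst_mergeYZ_divDiff [Fintype α] (F : MvPowerSeries (α ⊕ Fin n) ℝ) (i : Fin n) :
    mvSubst (fun v => X (mergeYZ v)) (divDiff F i) = mvPderiv (.inr i) F := by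
  classical
  ext e
  rw [coeff_mvSubst_X, ← Finset.sum_filter_of_ne (p := IsDivDiffExponent i) fun d _ hd => by
      by_contra h; exact hd (by rw [coeff_divDiff, if_neg h]),
    Finset.filter_filter, Finset.sum_congr rfl fun d hd => by
      rw [coeff_divDiff, if_pos (Finset.mem_filter.mp hd).2.2, (Finset.mem_filter.mp hd).2.1],
    Finset.sum_const,
    card_filter_isDivDiffExponent i e fun d => mem_Iic_of_mapDomain_eq _, nsmul_eq_mul,
    Nat.cast_add_one]
  rfl

lemma mvConvergent_divDiff [Fintype α] {F : MvPowerSeries (α ⊕ Fin n) ℝ} (hF : MvConvergent F)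
    (i : Fin n) : MvConvergent (divDiff F i) := by
  obtain ⟨r, hr, hsum⟩ := hF
  change Summable fun d => |coeff d F| * r ^ degree d at hsum
  refine ⟨r / 2, by positivity, ?_⟩
  change Summable fun e => |coeff e (divDiff F i)| * (r / 2) ^ degree e
  set V := {e | IsDivDiffExponent i e}
  set φ : (α ⊕ Fin n ⊕ Fin n →₀ ℕ) → (α ⊕ Fin n →₀ ℕ) × ℕ :=
    fun e => (mapDomain mergeYZ e + single (.inr i) 1, e (.inr (.inr i)))
  have hφ : Set.InjOn φ V := fun e he e' he' h => by
    simp only [φ, Prod.mk.injEq, add_left_inj] at h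
    exact eq_of_isDivDiffExponent he he' h.1 h.2
  set G : (α ⊕ Fin n →₀ ℕ) × ℕ → ℝ :=
    fun p => |coeff p.1 F| * r ^ degree p.1 * (r⁻¹ * (1 / 2) ^ p.2)
  have hG : Summable G :=
    hsum.mul_of_nonneg (summable_geometric_two.mul_left _) (fun _ => by positivity)
      fun _ => by positivity
  have hGφ : Summable (V.indicator (G ∘ φ)) :=
    summable_subtype_iff_indicator.mp (hG.comp_injective hφ.injective)
  refine hGφ.of_nonneg_of_le (fun e => by positivity) fun e => ?_
  by_cases he : IsDivDiffExponent i e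
  · rw [Set.indicator_of_mem (show e ∈ V from he), coeff_divDiff, if_pos he]
    have hdeg : degree (mapDomain mergeYZ e + single (.inr i) 1) = degree e + 1 := by
      rw [map_add, degree_mapDomain, degree_single]
    set c := |coeff (mapDomain mergeYZ e + single (.inr i) 1) F|
    calc c * (r / 2) ^ degree e = c * (r ^ degree e * (1 / 2) ^ degree e) := by
          rw [div_eq_mul_one_div r, mul_pow]
      _ ≤ c * (r ^ degree e * (1 / 2) ^ e (.inr (.inr i))) := by
          gcongr _ * (_ * ?_)
          exact pow_le_pow_of_le_one (by norm_num) (by norm_num) (le_degree _ e)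
      _ = (G ∘ φ) e := by
          simp only [c, G, φ, Function.comp_apply, hdeg, pow_succ]
          field_simp
  · rw [Set.indicator_of_notMem (show e ∉ V from he), coeff_divDiff, if_neg he, abs_zero,
      zero_mul]

end DividedDifference

/-- divided differences of a convergent power series can be chosen
convergent.  Variables: `Sum.inl` is the `X` variable, `Sum.inr (Sum.inl j)` the `Y`
variables and `Sum.inr (Sum.inr j)` the `Z` variables. -/
theorem stmt1 (n : ℕ) (F : MvPowerSeries (Unit ⊕ Fin n) ℝ) (hF : MvConvergent F) :
    ∃ B : Fin n → MvPowerSeries (Unit ⊕ Fin n ⊕ Fin n) ℝ,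
      (∀ i, MvConvergent (B i)) ∧
      (mvSubst (fun v => MvPowerSeries.X (Sum.map id Sum.inl v)) F
        - mvSubst (fun v => MvPowerSeries.X (Sum.map id (Sum.inr : Fin n → Fin n ⊕ Fin n) v)) F
        = ∑ i, B i * (MvPowerSeries.X (Sum.inr (Sum.inl i))
            - MvPowerSeries.X (Sum.inr (Sum.inr i)))) ∧
      ∀ i, mvSubst (fun v => MvPowerSeries.X (Sum.map id (Sum.elim id id) v)) (B i)
            = mvPderiv (Sum.inr i) F :=
  ⟨divDiff F, mvConvergent_divDiff hF, sub_eq_sum_divDiff_mul F, mvSubst_mergeYZ_divDiff F⟩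
end

section
/- Fix an integer $q \ge 1$ and real numbers $a_0 > 0, a_1, \dots, a_{q-1}$, and let $Q(z) := -z^{-q}\left(\frac{a_0}{q} + \frac{a_1}{q-1}z + \cdots + a_{q-1}z^{q-1}\right)$. Let $P_1, P_2 \in \mathbb{R}[z]$ be distinct polynomials, each with $P_i(0)=0$, positive lowest-order coefficient, and $\deg P_i < (q+1)\,\mathrm{ord}(P_i)$. Then the formal Laurent series $Q \circ P_1 - Q \circ P_2 \in \mathbb{R}(\!(z)\!)$ has a nonzero principal part, i.e. some coefficient of a strictly negative power of $z$ is nonzero. -/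
/-- The formal Laurent series `Q ∘ P`, where
`Q(z) = -z^{-q} (a₀/q + a₁/(q-1) z + ⋯ + a_{q-1} z^{q-1})`. -/
noncomputable def QcompP (q : ℕ) (a : ℕ → ℝ) (P : Polynomial ℝ) : LaurentSeries ℝ :=
  -(∑ j ∈ Finset.range q,
      (a j / ((q : ℝ) - j)) • (((P : PowerSeries ℝ) : LaurentSeries ℝ)) ^ j) /
    ((P : PowerSeries ℝ) : LaurentSeries ℝ) ^ q

/-!
Clearing denominators, `Q ∘ P₁ - Q ∘ P₂ = N / (P₁^q P₂^q)` with
`N = ∑_{j<q} c_j (P₂^j P₁^q - P₁^j P₂^q)` and `c_j = a_j / (q - j)`. Without principal part, `N`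
would vanish at `0` to order `q (ord P₁ + ord P₂)`. Say `ord P₁ ≤ ord P₂`. The term
`c₀ (P₁^q - P₂^q) = c₀ (∑_i P₁^i P₂^(q-1-i)) (P₁ - P₂)` has order at most
`(q - 1) ord P₁ + ord (P₁ - P₂)`, because the positive trailing coefficients cannot cancel in the
geometric sum. By `q`-shortness this is below `q (ord P₁ + ord P₂)`, and it is below the order of
every other term of `N`, so `N` has a nonzero coefficient there.
-/

open Finset

namespace Polynomial

section Semiring

variable {R : Type*} [Semiring R]

theorem X_pow_natTrailingDegree_dvd (p : R[X]) : X ^ p.natTrailingDegree ∣ p :=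
  X_pow_dvd_iff.mpr fun _ hd => coeff_eq_zero_of_lt_natTrailingDegree hd

theorem natTrailingDegree_pos {p : R[X]} (hp : p ≠ 0) (h0 : p.coeff 0 = 0) :
    0 < p.natTrailingDegree :=
  Nat.pos_of_ne_zero fun h => (natTrailingDegree_eq_zero.mp h).elim hp (· h0)

theorem coeff_nonneg_of_le_natTrailingDegree [Preorder R] {p : R[X]} {n : ℕ}
    (hp : 0 ≤ p.trailingCoeff) (hn : n ≤ p.natTrailingDegree) : 0 ≤ p.coeff n := by
  rcases hn.lt_or_eq with hn | rfl
  · rw [coeff_eq_zero_of_lt_natTrailingDegree hn]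
  · exact hp

variable [NoZeroDivisors R]

theorem trailingCoeff_pow (p : R[X]) (n : ℕ) :
    (p ^ n).trailingCoeff = p.trailingCoeff ^ n := by
  induction n with
  | zero => rw [pow_zero, pow_zero, trailingCoeff, natTrailingDegree_one, coeff_one_zero]
  | succ n ih => rw [pow_succ, trailingCoeff_mul, ih, pow_succ]

theorem natTrailingDegree_pow {p : R[X]} (hp : p ≠ 0) (n : ℕ) :
    (p ^ n).natTrailingDegree = n * p.natTrailingDegree := by
  induction n with
  | zero => simp
  | succ n ih => rw [pow_succ, natTrailingDegree_mul (pow_ne_zero n hp) hp, ih, Nat.succ_mul]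

end Semiring

theorem natTrailingDegree_sub_lt {R : Type*} [Ring R] {p r : R[X]} {q : ℕ} (hq : 0 < q)
    (hp : p ≠ 0) (hpr : p.natTrailingDegree ≤ r.natTrailingDegree)
    (hp_short : p.natDegree < (q + 1) * p.natTrailingDegree)
    (hr_short : r.natDegree < (q + 1) * r.natTrailingDegree) :
    (p - r).natTrailingDegree < p.natTrailingDegree + q * r.natTrailingDegree := by
  rcases hpr.lt_or_eq with hlt | heq
  · have hcoeff : (p - r).coeff p.natTrailingDegree ≠ 0 := by
      rw [coeff_sub, coeff_eq_zero_of_lt_natTrailingDegree hlt, sub_zero]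
      exact trailingCoeff_nonzero_iff_nonzero.mpr hp
    have := natTrailingDegree_le_of_ne_zero hcoeff
    have := Nat.mul_pos hq (Nat.zero_lt_of_lt hlt)
    omega
  · calc (p - r).natTrailingDegree ≤ (p - r).natDegree := natTrailingDegree_le_natDegree _
      _ ≤ max p.natDegree r.natDegree := natDegree_sub_le p r
      _ < (q + 1) * p.natTrailingDegree := max_lt hp_short (heq ▸ hr_short)
      _ = p.natTrailingDegree + q * r.natTrailingDegree := by rw [← heq]; ring

section Ordered

variable {R : Type*} [CommRing R] [LinearOrder R] [IsStrictOrderedRing R]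
  {p r : R[X]} (hp : 0 < p.trailingCoeff) (hr : 0 < r.trailingCoeff)
  (hpr : p.natTrailingDegree ≤ r.natTrailingDegree)
include hp hr hpr

/-- Every summand has nonnegative coefficient in degree `(n - 1) * ord p`, and the summand
`p ^ (n - 1)` has the positive coefficient `trailingCoeff p ^ (n - 1)` there. -/
theorem coeff_geom_sum₂_pos {n : ℕ} (hn : 0 < n) :
    0 < (∑ i ∈ range n, p ^ i * r ^ (n - 1 - i)).coeff ((n - 1) * p.natTrailingDegree) := by
  have hp0 : p ≠ 0 := trailingCoeff_nonzero_iff_nonzero.mp hp.ne'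
  have hr0 : r ≠ 0 := trailingCoeff_nonzero_iff_nonzero.mp hr.ne'
  rw [finsetSum_coeff]
  refine sum_pos' (fun i hi => coeff_nonneg_of_le_natTrailingDegree ?_ ?_) ⟨n - 1, ?_, ?_⟩
  · rw [trailingCoeff_mul, trailingCoeff_pow, trailingCoeff_pow]
    positivity
  · rw [natTrailingDegree_mul (pow_ne_zero _ hp0) (pow_ne_zero _ hr0), natTrailingDegree_pow hp0,
      natTrailingDegree_pow hr0]
    have hi : i + (n - 1 - i) = n - 1 := by have := mem_range.mp hi; omega
    calc (n - 1) * p.natTrailingDegree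
        = i * p.natTrailingDegree + (n - 1 - i) * p.natTrailingDegree := by rw [← add_mul, hi]
      _ ≤ _ := by gcongr
  · exact mem_range.mpr (Nat.sub_lt hn one_pos)
  · rw [Nat.sub_self, pow_zero, mul_one, ← natTrailingDegree_pow hp0, ← trailingCoeff,
      trailingCoeff_pow]
    positivity

theorem natTrailingDegree_pow_sub_pow_le (hne : p ≠ r) {n : ℕ} (hn : 0 < n) :
    p ^ n - r ^ n ≠ 0 ∧ (p ^ n - r ^ n).natTrailingDegree ≤
      (n - 1) * p.natTrailingDegree + (p - r).natTrailingDegree := by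
  have hH := (coeff_geom_sum₂_pos hp hr hpr hn).ne'
  have hH0 : ∑ i ∈ range n, p ^ i * r ^ (n - 1 - i) ≠ 0 := fun h => hH (by rw [h, coeff_zero])
  have hD : p - r ≠ 0 := sub_ne_zero.mpr hne
  rw [← geom_sum₂_mul, natTrailingDegree_mul hH0 hD]
  exact ⟨mul_ne_zero hH0 hD, Nat.add_le_add_right (natTrailingDegree_le_of_ne_zero hH) _⟩

/-- The `j = 0` part `c 0 • (p^q - r^q)` has strictly lower order at `0` than every other part. -/
theorem not_X_pow_dvd_sum_smul_pow_sub (c : ℕ → R) (hc : c 0 ≠ 0) {q : ℕ} (hq : 0 < q)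
    (hr_pos : 0 < r.natTrailingDegree) (hne : p ≠ r)
    (hD : (p - r).natTrailingDegree < p.natTrailingDegree + q * r.natTrailingDegree) :
    ¬ X ^ (q * (p.natTrailingDegree + r.natTrailingDegree)) ∣
      (∑ j ∈ range q, c j • r ^ j) * p ^ q - (∑ j ∈ range q, c j • p ^ j) * r ^ q := by
  obtain ⟨hpow0, hn₀⟩ := natTrailingDegree_pow_sub_pow_le hp hr hpr hne hq
  set n₀ := (p ^ q - r ^ q).natTrailingDegree
  have hqm : (q - 1) * p.natTrailingDegree < q * r.natTrailingDegree :=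
    calc (q - 1) * p.natTrailingDegree ≤ (q - 1) * r.natTrailingDegree := by gcongr
      _ < q * r.natTrailingDegree := Nat.mul_lt_mul_of_pos_right (Nat.sub_lt hq one_pos) hr_pos
  have hsplit : (∑ j ∈ range q, c j • r ^ j) * p ^ q - (∑ j ∈ range q, c j • p ^ j) * r ^ q
      = c 0 • (p ^ q - r ^ q) +
          ∑ j ∈ (range q).erase 0, c j • (r ^ j * p ^ q - p ^ j * r ^ q) := by
    rw [sum_mul, sum_mul, ← sum_sub_distrib, ← add_sum_erase _ _ (mem_range.mpr hq)]
    simp only [smul_mul_assoc, smul_sub, pow_zero, one_mul]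
  have hterm : ∀ j ∈ (range q).erase 0, X ^ (n₀ + 1) ∣ r ^ j * p ^ q - p ^ j * r ^ q := by
    intro j hj
    have hj0 : 0 < j := Nat.pos_of_ne_zero (ne_of_mem_erase hj)
    have hr_dvd : ∀ k, X ^ (k * r.natTrailingDegree) ∣ r ^ k := fun k => by
      rw [mul_comm, pow_mul]
      exact pow_dvd_pow_of_dvd (X_pow_natTrailingDegree_dvd r) k
    rw [show r ^ j * p ^ q - p ^ j * r ^ q = r ^ j * (p ^ q - r ^ q) - r ^ q * (p ^ j - r ^ j) by
      ring]
    refine dvd_sub ?_ ?_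
    · calc X ^ (n₀ + 1) ∣ X ^ (j * r.natTrailingDegree + n₀) :=
            pow_dvd_pow X (by have := Nat.mul_pos hj0 hr_pos; omega)
        _ = X ^ (j * r.natTrailingDegree) * X ^ n₀ := pow_add X _ _
        _ ∣ r ^ j * (p ^ q - r ^ q) := mul_dvd_mul (hr_dvd j) (X_pow_natTrailingDegree_dvd _)
    · calc X ^ (n₀ + 1) ∣ X ^ (q * r.natTrailingDegree + (p - r).natTrailingDegree) :=
            pow_dvd_pow X (by omega)
        _ = X ^ (q * r.natTrailingDegree) * X ^ (p - r).natTrailingDegree := pow_add X _ _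
        _ ∣ r ^ q * (p ^ j - r ^ j) := mul_dvd_mul (hr_dvd q)
            ((X_pow_natTrailingDegree_dvd _).trans (sub_dvd_pow_sub_pow p r j))
  have hlead : ¬ X ^ (n₀ + 1) ∣ c 0 • (p ^ q - r ^ q) := by
    rw [X_pow_dvd_iff]
    push Not
    refine ⟨n₀, Nat.lt_succ_self n₀, ?_⟩
    rw [coeff_smul, smul_eq_mul]
    exact mul_ne_zero hc (trailingCoeff_nonzero_iff_nonzero.mpr hpow0)
  intro hdvd
  have hq_sub : (q - 1) * p.natTrailingDegree + p.natTrailingDegree = q * p.natTrailingDegree := by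
    rw [← add_one_mul, Nat.sub_one_add_one hq.ne']
  have hn₀q : n₀ + 1 ≤ q * (p.natTrailingDegree + r.natTrailingDegree) := by
    rw [mul_add]
    omega
  have := (pow_dvd_pow X hn₀q).trans hdvd
  rw [hsplit, dvd_add_left (dvd_sum fun j hj => ?_)] at this
  · exact hlead this
  · rw [smul_eq_C_mul]
    exact dvd_mul_of_dvd_right (hterm j hj) _

end Ordered

open LaurentSeries in
/-- `X`-adic valuations are multiplicative. -/
theorem X_pow_dvd_of_coeff_neg_div_eq_zero {K : Type*} [Field K] {N M : K[X]} {k : ℕ}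
    (hM : M ≠ 0) (hMk : X ^ k ∣ M)
    (h : ∀ n < 0, (((N : PowerSeries K) : LaurentSeries K) /
      ((M : PowerSeries K) : LaurentSeries K)).coeff n = 0) :
    X ^ k ∣ N := by
  have hF : Valued.v (((N : PowerSeries K) : LaurentSeries K) /
      ((M : PowerSeries K) : LaurentSeries K)) ≤ 1 := by
    simpa using (valuation_le_iff_coeff_lt_eq_zero K (D := 0)).mpr h
  have hvM : Valued.v ((M : PowerSeries K) : LaurentSeries K) ≤ WithZero.exp (-k : ℤ) :=
    (intValuation_le_iff_coeff_lt_eq_zero K _).mpr fun n hn => by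
      rw [coeff_coe]
      exact X_pow_dvd_iff.mp hMk n hn
  have hM' : ((M : PowerSeries K) : LaurentSeries K) ≠ 0 :=
    (map_ne_zero_iff _ HahnSeries.ofPowerSeries_injective).mpr (coe_eq_zero_iff.not.mpr hM)
  have hvN : Valued.v ((N : PowerSeries K) : LaurentSeries K) ≤ WithZero.exp (-k : ℤ) := by
    rw [← div_mul_cancel₀ ((N : PowerSeries K) : LaurentSeries K) hM', map_mul]
    simpa using mul_le_mul' hF hvM
  refine X_pow_dvd_iff.mpr fun n hn => ?_
  rw [← coeff_coe]
  exact (intValuation_le_iff_coeff_lt_eq_zero K _).mp hvN n hn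

end Polynomial

open Polynomial

theorem QcompP_eq (q : ℕ) (a : ℕ → ℝ) (P : ℝ[X]) :
    QcompP q a P = -((((∑ j ∈ range q, (a j / ((q : ℝ) - j)) • P ^ j : ℝ[X]) : PowerSeries ℝ) :
      LaurentSeries ℝ)) / (((P ^ q : ℝ[X]) : PowerSeries ℝ) : LaurentSeries ℝ) := by
  have hsum : ((((∑ j ∈ range q, (a j / ((q : ℝ) - j)) • P ^ j : ℝ[X]) : PowerSeries ℝ) :
      LaurentSeries ℝ)) =
      ∑ j ∈ range q, (a j / ((q : ℝ) - j)) • (((P : PowerSeries ℝ) : LaurentSeries ℝ)) ^ j := by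
    rw [← coeToPowerSeries.ringHom_apply, map_sum, map_sum]
    simp only [coeToPowerSeries.ringHom_apply, Polynomial.coe_smul, Polynomial.coe_pow,
      PowerSeries.coe_smul, PowerSeries.coe_pow]
  rw [QcompP, hsum, Polynomial.coe_pow, PowerSeries.coe_pow]

theorem QcompP_sub_QcompP (q : ℕ) (a : ℕ → ℝ) {P₁ P₂ : ℝ[X]} (h₁ : P₁ ≠ 0) (h₂ : P₂ ≠ 0) :
    QcompP q a P₁ - QcompP q a P₂ =
      ((((∑ j ∈ range q, (a j / ((q : ℝ) - j)) • P₂ ^ j) * P₁ ^ q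
          - (∑ j ∈ range q, (a j / ((q : ℝ) - j)) • P₁ ^ j) * P₂ ^ q : ℝ[X]) : PowerSeries ℝ) :
        LaurentSeries ℝ) /
      (((P₁ ^ q * P₂ ^ q : ℝ[X]) : PowerSeries ℝ) : LaurentSeries ℝ) := by
  set φ : ℝ[X] →+* LaurentSeries ℝ := (HahnSeries.ofPowerSeries ℤ ℝ).comp coeToPowerSeries.ringHom
  have hφ : ∀ f : ℝ[X], ((f : PowerSeries ℝ) : LaurentSeries ℝ) = φ f := fun _ => rfl
  have hφ_inj : Function.Injective φ :=
    HahnSeries.ofPowerSeries_injective.comp (Polynomial.coe_injective ℝ)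
  have hφ₁ : φ (P₁ ^ q) ≠ 0 := (map_ne_zero_iff φ hφ_inj).mpr (pow_ne_zero q h₁)
  have hφ₂ : φ (P₂ ^ q) ≠ 0 := (map_ne_zero_iff φ hφ_inj).mpr (pow_ne_zero q h₂)
  simp only [QcompP_eq, hφ, map_sub, map_mul]
  rw [div_sub_div _ _ hφ₁ hφ₂]
  ring

theorem stmt3_general (q : ℕ) (hq : 1 ≤ q) (a : ℕ → ℝ) (ha : 0 < a 0)
    (P₁ P₂ : Polynomial ℝ)
    (h₁0 : P₁.coeff 0 = 0) (h₁c : 0 < P₁.trailingCoeff)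
    (h₁short : P₁.natDegree < (q + 1) * P₁.natTrailingDegree)
    (h₂0 : P₂.coeff 0 = 0) (h₂c : 0 < P₂.trailingCoeff)
    (h₂short : P₂.natDegree < (q + 1) * P₂.natTrailingDegree)
    (hne : P₁ ≠ P₂) :
    ∃ n : ℤ, n < 0 ∧ (QcompP q a P₁ - QcompP q a P₂).coeff n ≠ 0 := by
  wlog h12 : P₁.natTrailingDegree ≤ P₂.natTrailingDegree generalizing P₁ P₂
  · obtain ⟨n, hn, hcoeff⟩ :=
      this P₂ P₁ h₂0 h₂c h₂short h₁0 h₁c h₁short hne.symm (le_of_not_ge h12)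
    exact ⟨n, hn, by rwa [← neg_sub, HahnSeries.coeff_neg, neg_ne_zero]⟩
  have h₁ne : P₁ ≠ 0 := trailingCoeff_nonzero_iff_nonzero.mp h₁c.ne'
  have h₂ne : P₂ ≠ 0 := trailingCoeff_nonzero_iff_nonzero.mp h₂c.ne'
  have hc : a 0 / ((q : ℝ) - (0 : ℕ)) ≠ 0 :=
    div_ne_zero ha.ne' (by simpa using Nat.one_le_iff_ne_zero.mp hq)
  by_contra! hno_principal
  refine not_X_pow_dvd_sum_smul_pow_sub h₁c h₂c h12 (fun j => a j / ((q : ℝ) - j)) hc hq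
    (natTrailingDegree_pos h₂ne h₂0) hne
    (natTrailingDegree_sub_lt hq h₁ne h12 h₁short h₂short) ?_
  refine X_pow_dvd_of_coeff_neg_div_eq_zero (mul_ne_zero (pow_ne_zero q h₁ne) (pow_ne_zero q h₂ne))
    ?_ (by rwa [← QcompP_sub_QcompP q a h₁ne h₂ne])
  rw [mul_add, pow_add, mul_comm q, mul_comm q, pow_mul, pow_mul]
  exact mul_dvd_mul (pow_dvd_pow_of_dvd (X_pow_natTrailingDegree_dvd P₁) q)
    (pow_dvd_pow_of_dvd (X_pow_natTrailingDegree_dvd P₂) q)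

/-- for distinct `q`-short positive polynomials `P₁, P₂`, the Laurent
series `Q ∘ P₁ - Q ∘ P₂` has nonzero principal part. -/
theorem stmt3 (q : ℕ) (hq : 1 ≤ q) (a : ℕ → ℝ) (ha : 0 < a 0)
    (P₁ P₂ : Polynomial ℝ)
    (h₁0 : P₁.coeff 0 = 0) (h₁ne : P₁ ≠ 0) (h₁c : 0 < P₁.trailingCoeff)
    (h₁short : P₁.natDegree < (q + 1) * P₁.natTrailingDegree)
    (h₂0 : P₂.coeff 0 = 0) (h₂ne : P₂ ≠ 0) (h₂c : 0 < P₂.trailingCoeff)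
    (h₂short : P₂.natDegree < (q + 1) * P₂.natTrailingDegree)
    (hne : P₁ ≠ P₂) :
    ∃ n : ℤ, n < 0 ∧ (QcompP q a P₁ - QcompP q a P₂).coeff n ≠ 0 :=
  stmt3_general q hq a ha P₁ P₂ h₁0 h₁c h₁short h₂0 h₂c h₂short hne
end

section
/- Fix an integer $q \ge 1$, real numbers $a_0>0, a_1,\dots,a_{q-1}$, and $Q(x) := -x^{-q}(\frac{a_0}{q} + \frac{a_1}{q-1}x + \cdots + a_{q-1}x^{q-1})$. Let $P_1, P_2$ be distinct $q$-short positive polynomials (in particular $P_i(0)=0$). Then $\lim_{x \to 0^+} |Q(P_1(x)) - Q(P_2(x))| = +\infty$. -/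
/-!
Since `Q'(y) = (a₀ + a₁ y + ⋯ + a_{q-1} y^{q-1}) / y^{q+1}` and the numerator is close to `a₀ > 0`
for small `y`, the mean value theorem gives `|Q u - Q v| ≳ |u - v| / w^{q+1}` whenever
`0 < u, v ≤ w` and `w` is small. Let `m` be the smaller of the orders of `P₁, P₂` at `0` and `r`
the order of `P₁ - P₂`. Near `0⁺` we have `P₁, P₂ ≲ x^m` and `|P₁ - P₂| ≳ x^r`, so taking
`w ≍ x^m` yields `|Q(P₁ x) - Q(P₂ x)| ≳ x^{r - (q+1) m}`, and shortness gives `r < (q+1) m`.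
-/

open Filter Set Polynomial Topology Asymptotics

/-- The function `Q(x) = -x^{-q} (a₀/q + a₁/(q-1) x + ⋯ + a_{q-1} x^{q-1})`. -/
noncomputable def Qfun (q : ℕ) (a : ℕ → ℝ) : ℝ → ℝ :=
  fun x => -(∑ j ∈ Finset.range q, a j / ((q : ℝ) - j) * x ^ j) / x ^ q

theorem isBigO_pow_pow_of_le {𝕜 : Type*} [NormedField 𝕜] {m k : ℕ} (h : m ≤ k) :
    (fun x : 𝕜 => x ^ k) =O[𝓝 0] fun x => x ^ m := by
  rcases h.eq_or_lt with rfl | hlt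
  · exact isBigO_refl _ _
  · exact (isLittleO_pow_pow hlt).isBigO

namespace Polynomial

theorem isTheta_pow_natTrailingDegree {𝕜 : Type*} [NormedField 𝕜] {P : 𝕜[X]} (hP : P ≠ 0) :
    (fun x => P.eval x) =Θ[𝓝[≠] 0] fun x => x ^ P.natTrailingDegree := by
  obtain ⟨T, hT⟩ : X ^ P.natTrailingDegree ∣ P :=
    X_pow_dvd_iff.mpr fun _ hd => coeff_eq_zero_of_lt_natTrailingDegree hd
  have hT0 : T.eval 0 = P.trailingCoeff := by
    rw [← coeff_zero_eq_eval_zero, trailingCoeff, ← coeff_X_pow_mul T P.natTrailingDegree 0,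
      zero_add, ← hT]
  set m := P.natTrailingDegree
  have hlim : Tendsto T.eval (𝓝[≠] 0) (𝓝 P.trailingCoeff) :=
    hT0 ▸ T.continuous.continuousAt.tendsto.mono_left nhdsWithin_le_nhds
  refine (isTheta_of_div_tendsto_nhds_ne_zero (hlim.congr' ?_)
    (trailingCoeff_nonzero_iff_nonzero.mpr hP)).symm
  filter_upwards [self_mem_nhdsWithin] with x hx
  rw [hT, eval_mul, eval_pow, eval_X, mul_div_cancel_left₀ _ (pow_ne_zero _ hx)]

theorem natTrailingDegree_sub_lt_mul_min {R : Type*} [Ring R] {P₁ P₂ : R[X]} {n : ℕ}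
    (h₁ : P₁.natDegree < n * P₁.natTrailingDegree)
    (h₂ : P₂.natDegree < n * P₂.natTrailingDegree) :
    (P₁ - P₂).natTrailingDegree < n * min P₁.natTrailingDegree P₂.natTrailingDegree := by
  have lower_order_wins : ∀ {A B : R[X]}, A.natTrailingDegree < B.natTrailingDegree →
      A.natDegree < n * A.natTrailingDegree →
      (A - B).natTrailingDegree < n * A.natTrailingDegree := fun {A B} hlt hA => by
    have hA0 : A ≠ 0 := by rintro rfl; simp at hA
    have hcoeff : (A - B).coeff A.natTrailingDegree ≠ 0 := by
      rw [coeff_sub, coeff_eq_zero_of_lt_natTrailingDegree hlt, sub_zero]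
      exact trailingCoeff_nonzero_iff_nonzero.mpr hA0
    exact (natTrailingDegree_le_of_ne_zero hcoeff).trans_lt
      ((natTrailingDegree_le_natDegree A).trans_lt hA)
  rcases lt_trichotomy P₁.natTrailingDegree P₂.natTrailingDegree with hlt | heq | hgt
  · rw [min_eq_left hlt.le]
    exact lower_order_wins hlt h₁
  · rw [← heq, min_self]
    calc (P₁ - P₂).natTrailingDegree ≤ (P₁ - P₂).natDegree := natTrailingDegree_le_natDegree _
      _ ≤ max P₁.natDegree P₂.natDegree := natDegree_sub_le _ _
      _ < n * P₁.natTrailingDegree := max_lt h₁ (heq ▸ h₂)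
  · rw [min_eq_right hgt.le, ← natTrailingDegree_neg, neg_sub]
    exact lower_order_wins hgt h₂

theorem natTrailingDegree_pos_of_natDegree_lt_mul {R : Type*} [Semiring R] {P : R[X]} {n : ℕ}
    (h : P.natDegree < n * P.natTrailingDegree) : 0 < P.natTrailingDegree :=
  Nat.pos_of_ne_zero fun h0 => by simp [h0] at h

theorem isBigO_pow_of_le_natTrailingDegree {𝕜 : Type*} [NormedField 𝕜] {P : 𝕜[X]} (hP : P ≠ 0)
    {k : ℕ} (hk : k ≤ P.natTrailingDegree) :
    (fun x => P.eval x) =O[𝓝[≠] 0] fun x => x ^ k :=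
  (isTheta_pow_natTrailingDegree hP).isBigO.trans
    ((isBigO_pow_pow_of_le hk).mono nhdsWithin_le_nhds)

end Polynomial

section Qfun

variable (q : ℕ) (a : ℕ → ℝ)

theorem Qfun_eq_sum_zpow {y : ℝ} (hy : y ≠ 0) :
    Qfun q a y = ∑ j ∈ Finset.range q, -(a j / ((q : ℝ) - j)) * y ^ ((j : ℤ) - q) := by
  simp only [Qfun, neg_div, Finset.sum_div, ← Finset.sum_neg_distrib, neg_mul, zpow_sub₀ hy,
    zpow_natCast, mul_div_assoc]

theorem hasDerivAt_Qfun {y : ℝ} (hy : y ≠ 0) :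
    HasDerivAt (Qfun q a) ((∑ j ∈ Finset.range q, a j * y ^ j) / y ^ (q + 1)) y := by
  have hsum := HasDerivAt.fun_sum (u := Finset.range q) fun j _ =>
    (hasDerivAt_zpow ((j : ℤ) - q) y (Or.inl hy)).const_mul (-(a j / ((q : ℝ) - j)))
  refine (hsum.congr_of_eventuallyEq ?_).congr_deriv ?_
  · filter_upwards [eventually_ne_nhds hy] with z hz using Qfun_eq_sum_zpow q a hz
  · rw [Finset.sum_div]
    refine Finset.sum_congr rfl fun j hj => ?_
    have hqj : (q : ℝ) - j ≠ 0 := sub_ne_zero.mpr (by exact_mod_cast (Finset.mem_range.mp hj).ne')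
    rw [zpow_sub₀ hy, zpow_sub₀ hy, zpow_natCast, zpow_natCast, zpow_one]
    push_cast
    field_simp
    ring

theorem eventually_le_abs_Qfun_sub (hq : 1 ≤ q) (ha : 0 < a 0) :
    ∀ᶠ w in 𝓝[>] (0 : ℝ), ∀ u ∈ Ioc 0 w, ∀ v ∈ Ioc 0 w,
      a 0 / 2 / w ^ (q + 1) * |u - v| ≤ |Qfun q a u - Qfun q a v| := by
  have hA : ∀ᶠ y in 𝓝 0, a 0 / 2 ≤ ∑ j ∈ Finset.range q, a j * y ^ j := by
    refine (Continuous.tendsto (by fun_prop) 0).eventually (eventually_ge_nhds ?_)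
    rw [Finset.sum_eq_single_of_mem 0 (Finset.mem_range.mpr hq) fun j _ hj => by simp [hj]]
    simpa using ha
  obtain ⟨ε, hε, hA⟩ := Metric.eventually_nhds_iff_ball.mp hA
  filter_upwards [Ioo_mem_nhdsGT hε] with w hw
  have hQ' : ∀ y ∈ Ioi (0 : ℝ), HasDerivAt (Qfun q a)
      ((∑ j ∈ Finset.range q, a j * y ^ j) / y ^ (q + 1)) y :=
    fun y hy => hasDerivAt_Qfun q a (ne_of_gt hy)
  have hderiv : ∀ y ∈ interior (Ioc 0 w), a 0 / 2 / w ^ (q + 1) ≤ deriv (Qfun q a) y := by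
    rw [interior_Ioc]
    intro y hy
    rw [(hQ' y hy.1).deriv]
    have hyε : y ∈ Metric.ball 0 ε := by
      rw [mem_ball_zero_iff, Real.norm_of_nonneg hy.1.le]
      exact hy.2.trans hw.2
    exact div_le_div₀ ((half_pos ha).le.trans (hA y hyε)) (hA y hyε) (pow_pos hy.1 _)
      (pow_le_pow_left₀ hy.1.le hy.2.le _)
  have hmono := (convex_Ioc 0 w).mul_sub_le_image_sub_of_le_deriv
    (fun y hy => (hQ' y hy.1).continuousAt.continuousWithinAt)
    (fun y hy => (hQ' y (interior_subset hy).1).differentiableAt.differentiableWithinAt) hderiv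
  intro u hu v hv
  rcases le_total u v with huv | hvu
  · rw [abs_sub_comm u v, abs_sub_comm (Qfun q a u), abs_of_nonneg (sub_nonneg.mpr huv)]
    exact (hmono u hu v hv huv).trans (le_abs_self _)
  · rw [abs_of_nonneg (sub_nonneg.mpr hvu)]
    exact (hmono v hv u hu hvu).trans (le_abs_self _)

end Qfun

theorem tendsto_const_mul_pow_nhdsGT_zero {C : ℝ} (hC : 0 < C) {n : ℕ} (hn : n ≠ 0) :
    Tendsto (fun x : ℝ => C * x ^ n) (𝓝[>] 0) (𝓝[>] 0) := by
  refine tendsto_nhdsWithin_of_tendsto_nhds_of_eventually_within _ ?_ ?_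
  · have : Tendsto (fun x : ℝ => C * x ^ n) (𝓝 0) (𝓝 (C * 0 ^ n)) :=
      (Continuous.tendsto (by fun_prop) 0)
    simpa [zero_pow hn] using this.mono_left nhdsWithin_le_nhds
  · filter_upwards [self_mem_nhdsWithin] with x hx using mul_pos hC (pow_pos hx n)

theorem tendsto_pow_div_pow_nhdsGT_zero {r N : ℕ} (h : r < N) :
    Tendsto (fun x : ℝ => x ^ r / x ^ N) (𝓝[>] 0) atTop := by
  obtain ⟨n, rfl⟩ := Nat.exists_eq_add_of_lt h
  refine (tendsto_const_mul_pow_nhdsGT_zero one_pos n.add_one_ne_zero).inv_tendsto_nhdsGT_zero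
    |>.congr' ?_
  filter_upwards [self_mem_nhdsWithin] with x (hx : 0 < x)
  rw [Pi.inv_apply, one_mul, add_assoc, pow_add x r]
  field_simp

theorem tendsto_abs_Qfun_sub_atTop (q : ℕ) (a : ℕ → ℝ) (hq : 1 ≤ q) (ha : 0 < a 0)
    {u v : ℝ → ℝ} {m r : ℕ} (hm : m ≠ 0) (hr : r < (q + 1) * m)
    (hu : ∀ᶠ x in 𝓝[>] 0, 0 < u x) (hv : ∀ᶠ x in 𝓝[>] 0, 0 < v x)
    (hupper : (fun x => u x + v x) =O[𝓝[>] 0] fun x => x ^ m)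
    (hlower : (fun x => x ^ r) =O[𝓝[>] 0] fun x => u x - v x) :
    Tendsto (fun x => |Qfun q a (u x) - Qfun q a (v x)|) (𝓝[>] 0) atTop := by
  obtain ⟨C, hC, hCuv⟩ := hupper.exists_pos
  obtain ⟨c, hc, hcuv⟩ := hlower.exists_pos
  have hbound :
      Tendsto (fun x => a 0 / 2 / (C * x ^ m) ^ (q + 1) * (x ^ r / c)) (𝓝[>] 0) atTop := by
    refine ((tendsto_pow_div_pow_nhdsGT_zero hr).const_mul_atTop
      (by positivity : 0 < a 0 / 2 / C ^ (q + 1) / c)).congr' ?_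
    filter_upwards [self_mem_nhdsWithin] with x (hx : 0 < x)
    rw [mul_pow, ← pow_mul, mul_comm m]
    field_simp
  refine tendsto_atTop_mono' _ ?_ hbound
  filter_upwards [(tendsto_const_mul_pow_nhdsGT_zero hC hm).eventually
    (eventually_le_abs_Qfun_sub q a hq ha), hCuv.bound, hcuv.bound, hu, hv,
    self_mem_nhdsWithin] with x hQ hCx hcx hux hvx (hx : 0 < x)
  rw [Real.norm_of_nonneg (by positivity), Real.norm_of_nonneg (pow_pos hx _).le] at hCx
  rw [Real.norm_of_nonneg (pow_pos hx _).le, Real.norm_eq_abs] at hcx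
  calc a 0 / 2 / (C * x ^ m) ^ (q + 1) * (x ^ r / c)
      ≤ a 0 / 2 / (C * x ^ m) ^ (q + 1) * |u x - v x| := by
        refine mul_le_mul_of_nonneg_left ?_ (div_nonneg (half_pos ha).le (by positivity))
        rwa [div_le_iff₀' hc]
    _ ≤ _ := hQ _ ⟨hux, by linarith⟩ _ ⟨hvx, by linarith⟩

theorem stmt5_general (q : ℕ) (hq : 1 ≤ q) (a : ℕ → ℝ) (ha : 0 < a 0)
    (P₁ P₂ : Polynomial ℝ) (hne : P₁ ≠ P₂)
    (h₁short : P₁.natDegree < (q + 1) * P₁.natTrailingDegree)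
    (h₂short : P₂.natDegree < (q + 1) * P₂.natTrailingDegree)
    (h₁pos : ∃ ε > 0, ∀ x ∈ Ioc (0:ℝ) ε, 0 < P₁.eval x)
    (h₂pos : ∃ ε > 0, ∀ x ∈ Ioc (0:ℝ) ε, 0 < P₂.eval x) :
    Tendsto (fun x => |Qfun q a (P₁.eval x) - Qfun q a (P₂.eval x)|)
      (nhdsWithin 0 (Ioi 0)) atTop := by
  set m := min P₁.natTrailingDegree P₂.natTrailingDegree
  have hm₁ := natTrailingDegree_pos_of_natDegree_lt_mul h₁short
  have hm₂ := natTrailingDegree_pos_of_natDegree_lt_mul h₂short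
  have hupper : ∀ P : ℝ[X], 0 < P.natTrailingDegree → m ≤ P.natTrailingDegree →
      (fun x => P.eval x) =O[𝓝[>] 0] fun x => x ^ m := fun P hP hmP =>
    (isBigO_pow_of_le_natTrailingDegree (by rintro rfl; simp at hP) hmP).mono
      (nhdsGT_le_nhdsNE 0)
  have hlower := (isTheta_pow_natTrailingDegree (sub_ne_zero.mpr hne)).isBigO_symm.mono
    (nhdsGT_le_nhdsNE 0)
  simp only [eval_sub] at hlower
  exact tendsto_abs_Qfun_sub_atTop q a hq ha (lt_min hm₁ hm₂).ne'
    (natTrailingDegree_sub_lt_mul_min h₁short h₂short)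
    (mem_nhdsGT_iff_exists_Ioc_subset.mpr h₁pos) (mem_nhdsGT_iff_exists_Ioc_subset.mpr h₂pos)
    ((hupper P₁ hm₁ (min_le_left _ _)).add (hupper P₂ hm₂ (min_le_right _ _))) hlower

/-- for distinct `q`-short positive polynomials `P₁, P₂`,
`|Q(P₁(x)) - Q(P₂(x))| → ∞` as `x → 0⁺`. -/
theorem stmt5 (q : ℕ) (hq : 1 ≤ q) (a : ℕ → ℝ) (ha : 0 < a 0)
    (P₁ P₂ : Polynomial ℝ) (hne : P₁ ≠ P₂)
    (h₁0 : P₁.coeff 0 = 0) (h₂0 : P₂.coeff 0 = 0)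
    (h₁short : P₁.natDegree < (q + 1) * P₁.natTrailingDegree)
    (h₂short : P₂.natDegree < (q + 1) * P₂.natTrailingDegree)
    (h₁pos : ∃ ε > 0, ∀ x ∈ Ioc (0:ℝ) ε, 0 < P₁.eval x)
    (h₂pos : ∃ ε > 0, ∀ x ∈ Ioc (0:ℝ) ε, 0 < P₂.eval x) :
    Tendsto (fun x => |Qfun q a (P₁.eval x) - Qfun q a (P₂.eval x)|)
      (nhdsWithin 0 (Ioi 0)) atTop :=
  stmt5_general q hq a ha P₁ P₂ hne h₁short h₂short h₁pos h₂pos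
end

section
/- Let $q \ge 1$ and $r$ with $0 < r \le q$, and let $A(x) = a(x)I + x^r J(x) \in \mathcal{M}_2(\mathbb{R}[x])$, where $a(x)$ is a polynomial of degree $\le r-1$ and $J(x) = J_0 + xJ_1 + \cdots + x^{q-r}J_{q-r}$ with $J_0 = \begin{pmatrix}\mathfrak{a} & -\mathfrak{b} \\ \mathfrak{b} & \mathfrak{a}\end{pmatrix}$, $\mathfrak{b} \neq 0$. Then there exist matrices $T_1,\dots,T_q \in \mathcal{M}_2(\mathbb{R})$ such that, setting $T(x) = I + xT_1 + \cdots + x^q T_q$, there are $D(x) = a(x)I + x^r N(x)$ with $N(x) = N_0 + \cdots + x^{q-r}N_{q-r}$, each $N_j$ of the form $\begin{pmatrix}\mathfrak{a}_j & -\mathfrak{b}_j \\ \mathfrak{b}_j & \mathfrak{a}_j\end{pmatrix}$ and $N_0 = J_0$, and $E \in \mathcal{M}_2(\mathbb{R}[x])$ of degree $\le q$, satisfying $A(x)T(x) - T(x)D(x) - x^{q+1}T'(x) = x^{q+1}E(x)$. -/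
/-!
The scalar part `a I` is central, so `A T - T D = x^r (J T - T N)`, and the whole claim reduces
to the formal conjugacy `J T ≡ T N mod x^(q-r+1)`; the degree bound on `E` is then degree
counting. The conjugacy is solved degree by degree: in degree `k` the unknowns `T_k`, `N_k`
enter only through `[J₀, T_k] - N_k`, everything else being determined by lower degrees.
Since `𝔟 ≠ 0`, the commutator with `J₀ = 𝔞 I + 𝔟 J` maps onto the matrices anticommuting with
`J`, and the part of a matrix commuting with `J` has the form `αI + βJ`, which is absorbed
into `N_k`.
-/

open Polynomial Finset

namespace Polynomial

section Semiring

variable {S : Type*} [Semiring S]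

theorem exists_eq_X_pow_mul_of_coeff_eq_zero (p : S[X])
    {s d : ℕ} (hlow : ∀ k < s, p.coeff k = 0) (hdeg : p.natDegree ≤ s + d) :
    ∃ e : S[X], e.natDegree ≤ d ∧ p = X ^ s * e := by
  obtain ⟨e, rfl⟩ := X_pow_dvd_iff.mpr hlow
  refine ⟨e, ?_, rfl⟩
  rcases eq_or_ne e 0 with rfl | he
  · simp
  · have : Nontrivial S := nontrivial_of_ne _ _ (leadingCoeff_ne_zero.mpr he)
    rw [(monic_X_pow s).natDegree_mul' he, natDegree_X_pow] at hdeg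
    omega

theorem natDegree_sum_range_monomial_le (F : ℕ → S) (d : ℕ) :
    (∑ j ∈ range (d + 1), monomial j (F j)).natDegree ≤ d :=
  natDegree_sum_le_of_forall_le _ _ fun _ hj =>
    (natDegree_monomial_le _).trans (Nat.lt_succ_iff.mp (mem_range.mp hj))

end Semiring

section Ring

variable {S : Type*} [Ring S]

theorem mul_add_monomial_sub_mul_add_monomial (J T N : S[X]) (m : ℕ) (t n : S) :
    J * (T + monomial m t) - (T + monomial m t) * (N + monomial m n) =
      J * T - T * N + (J * C t - C t * N - T * C n - C (t * n) * X ^ m) * X ^ m := by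
  simp only [← C_mul_X_pow_eq_monomial, C_mul]
  have hN := (commute_X_pow N m).eq
  have hn := (commute_X_pow (C n) m).eq
  simp only [mul_add, add_mul, sub_mul, mul_assoc, ← hN, ← hn]
  simp only [← mul_assoc]
  abel

theorem exists_coeff_mul_sub_mul_eq_zero (J : S[X]) (𝒞 : Set S) (h0 : (0 : S) ∈ 𝒞)
    (hJ0 : J.coeff 0 ∈ 𝒞) (hsolve : ∀ W, ∃ t, ∃ n ∈ 𝒞, J.coeff 0 * t - t * J.coeff 0 + W = n)
    (m : ℕ) :
    ∃ T N : S[X], T.natDegree ≤ m ∧ N.natDegree ≤ m ∧ T.coeff 0 = 1 ∧ N.coeff 0 = J.coeff 0 ∧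
      (∀ k, N.coeff k ∈ 𝒞) ∧ ∀ k ≤ m, (J * T - T * N).coeff k = 0 := by
  induction m with
  | zero =>
    refine ⟨1, C (J.coeff 0), by simp, by simp, by simp, by simp, fun k => ?_, fun k hk => ?_⟩
    · rw [coeff_C]; split_ifs <;> assumption
    · obtain rfl := Nat.le_zero.mp hk
      simp
  | succ m ih =>
    obtain ⟨T, N, hT, hN, hT0, hN0, hN𝒞, hlow⟩ := ih
    -- adding `t, n` in degree `m + 1` changes that coefficient by `[J₀, t] - n` only
    obtain ⟨t, n, hn, hsol⟩ := hsolve ((J * T - T * N).coeff (m + 1))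
    refine ⟨T + monomial (m + 1) t, N + monomial (m + 1) n, ?_, ?_, ?_, ?_, fun k => ?_,
      fun k hk => ?_⟩
    · exact natDegree_add_le_of_degree_le (hT.trans m.le_succ) (natDegree_monomial_le t)
    · exact natDegree_add_le_of_degree_le (hN.trans m.le_succ) (natDegree_monomial_le n)
    · simp [hT0]
    · simp [hN0]
    · rw [coeff_add, coeff_monomial]
      split_ifs with h
      · rw [← h, coeff_eq_zero_of_natDegree_lt (by omega), zero_add]
        exact hn
      · simpa using hN𝒞 k
    · rw [mul_add_monomial_sub_mul_add_monomial, coeff_add, coeff_mul_X_pow']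
      rcases hk.lt_or_eq with hk | rfl
      · rw [if_neg (by omega), add_zero, hlow k (by omega)]
      · simp [mul_coeff_zero, hT0, hN0, ← hsol]

end Ring

end Polynomial

def rotScale {K : Type*} [Neg K] (p : K × K) : Matrix (Fin 2) (Fin 2) K := !![p.1, -p.2; p.2, p.1]

theorem exists_rotScale_mul_sub_mul_add_eq_rotScale {K : Type*} [Field K] (h2 : (2 : K) ≠ 0)
    (α β : K) (hβ : β ≠ 0) (W : Matrix (Fin 2) (Fin 2) K) :
    ∃ t, ∃ n ∈ Set.range (rotScale (K := K)),
      rotScale (α, β) * t - t * rotScale (α, β) + W = n := by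
  -- the commutator is `β [J, t]`, and `[J, ·]` maps onto the matrices anticommuting with `J`:
  -- `t` cancels the anticommuting part of `W`, leaving its commuting part `n`
  refine ⟨!![0, (W 0 0 - W 1 1) / (2 * β); 0, (W 0 1 + W 1 0) / (2 * β)],
    _, ⟨((W 0 0 + W 1 1) / 2, (W 1 0 - W 0 1) / 2), rfl⟩, ?_⟩
  ext i j
  fin_cases i <;> fin_cases j <;>
    simp [rotScale] <;> field_simp <;> ring

theorem rotScale_eq_of_mem_range {K : Type*} [Neg K] {M : Matrix (Fin 2) (Fin 2) K}
    (hM : M ∈ Set.range (rotScale (K := K))) : rotScale (M 0 0, M 1 0) = M := by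
  obtain ⟨p, rfl⟩ := hM
  rfl

section MatPoly

variable {R : Type*} [CommSemiring R] {n : Type*} [Fintype n] [DecidableEq n]

theorem matPolyEquiv_sum_X_pow_smul_map_C (s : Finset ℕ) (F : ℕ → Matrix n n R) :
    matPolyEquiv (∑ j ∈ s, (X ^ j : R[X]) • (F j).map C) = ∑ j ∈ s, monomial j (F j) := by
  simp [map_sum, ← C_mul_X_pow_eq_monomial, (commute_X_pow _ _).eq]

theorem natDegree_apply_le_natDegree_matPolyEquiv (M : Matrix n n R[X]) (i j : n) :
    (M i j).natDegree ≤ (matPolyEquiv M).natDegree := by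
  rw [natDegree_le_iff_coeff_eq_zero]
  intro k hk
  rw [← matPolyEquiv_coeff_apply, coeff_eq_zero_of_natDegree_lt hk, Matrix.zero_apply]

theorem matPolyEquiv_symm_eq_sum_range (P : (Matrix n n R)[X]) {d : ℕ} (hP : P.natDegree ≤ d) :
    matPolyEquiv.symm P = ∑ j ∈ range (d + 1), (X ^ j : R[X]) • (P.coeff j).map C := by
  rw [AlgEquiv.symm_apply_eq, matPolyEquiv_sum_X_pow_smul_map_C]
  exact as_sum_range' P _ (Nat.lt_succ_of_le hP)

theorem matPolyEquiv_symm_eq_one_add_sum_Icc (P : (Matrix n n R)[X]) {d : ℕ}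
    (hP : P.natDegree ≤ d) (hP0 : P.coeff 0 = 1) :
    matPolyEquiv.symm P = 1 + ∑ j ∈ Icc 1 d, (X ^ j : R[X]) • (P.coeff j).map C := by
  have hrange : range (d + 1) = insert 0 (Icc 1 d) := by ext; simp; omega
  rw [matPolyEquiv_symm_eq_sum_range P hP, hrange, sum_insert (by simp), hP0, pow_zero, one_smul,
    Matrix.map_one _ (map_zero C) (map_one C)]

end MatPoly

section Conjugation

variable {R : Type*} [CommRing R] {n : Type*} [Fintype n] [DecidableEq n]

theorem exists_conj_sub_X_pow_smul_derivative_eq (a : R[X]) (J T N : Matrix n n R[X]) {q r : ℕ}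
    (hrq : r ≤ q) (hJ : (matPolyEquiv J).natDegree ≤ q - r) (hT : (matPolyEquiv T).natDegree ≤ q)
    (hN : (matPolyEquiv N).natDegree ≤ q - r)
    (hlow : ∀ k ≤ q - r, (matPolyEquiv (J * T - T * N)).coeff k = 0) :
    ∃ E : Matrix n n R[X], (∀ i j, (E i j).natDegree ≤ q) ∧
      (a • 1 + (X ^ r : R[X]) • J) * T - T * (a • 1 + (X ^ r : R[X]) • N) -
        (X ^ (q + 1) : R[X]) • T.map derivative = (X ^ (q + 1) : R[X]) • E := by
  have hdeg : (matPolyEquiv (J * T - T * N)).natDegree ≤ (q - r + 1) + q := by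
    rw [map_sub, map_mul, map_mul]
    refine (natDegree_sub_le _ _).trans (max_le ?_ ?_) <;>
      refine natDegree_mul_le.trans ?_ <;> omega
  have hfactor : ∀ i j, ∃ e : R[X], e.natDegree ≤ q ∧ (J * T - T * N) i j = X ^ (q - r + 1) * e :=
    fun i j => exists_eq_X_pow_mul_of_coeff_eq_zero _
      (fun k hk => by rw [← matPolyEquiv_coeff_apply, hlow k (by omega), Matrix.zero_apply])
      ((natDegree_apply_le_natDegree_matPolyEquiv _ i j).trans hdeg)
  choose E hEdeg hE using hfactor
  refine ⟨Matrix.of E - T.map derivative, fun i j => ?_, ?_⟩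
  · refine (natDegree_sub_le _ _).trans (max_le (hEdeg i j) ?_)
    have := natDegree_apply_le_natDegree_matPolyEquiv T i j
    have := natDegree_derivative_le (T i j)
    simp only [Matrix.map_apply]
    omega
  · have hcomm : (a • 1 + (X ^ r : R[X]) • J) * T - T * (a • 1 + (X ^ r : R[X]) • N) =
        (X ^ r : R[X]) • (J * T - T * N) := by
      simp only [add_mul, mul_add, Matrix.smul_mul, Matrix.mul_smul, one_mul, mul_one, smul_sub]
      abel
    have hpow : (X ^ r : R[X]) * X ^ (q - r + 1) = X ^ (q + 1) := by
      rw [← pow_add]; congr 1; omega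
    ext i j
    simp [hcomm, hE, ← mul_assoc, hpow, mul_sub]

end Conjugation

theorem stmt8_general (q r : ℕ) (hrq : r ≤ q)
    (a : Polynomial ℝ)
    (𝕒 𝕓 : ℝ) (hb : 𝕓 ≠ 0)
    (Jc : ℕ → Matrix (Fin 2) (Fin 2) ℝ) (hJ0 : Jc 0 = !![𝕒, -𝕓; 𝕓, 𝕒]) :
    let C2 : Matrix (Fin 2) (Fin 2) ℝ → Matrix (Fin 2) (Fin 2) (Polynomial ℝ) :=
      fun M => M.map Polynomial.C
    let Jpoly : Matrix (Fin 2) (Fin 2) (Polynomial ℝ) :=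
      ∑ j ∈ Finset.range (q - r + 1), (Polynomial.X ^ j : Polynomial ℝ) • C2 (Jc j)
    let A : Matrix (Fin 2) (Fin 2) (Polynomial ℝ) :=
      a • 1 + (Polynomial.X ^ r : Polynomial ℝ) • Jpoly
    ∃ (Tc : ℕ → Matrix (Fin 2) (Fin 2) ℝ) (Nc : ℕ → ℝ × ℝ)
      (E : Matrix (Fin 2) (Fin 2) (Polynomial ℝ)),
      Nc 0 = (𝕒, 𝕓) ∧
      (∀ i j, (E i j).natDegree ≤ q) ∧
      (let T : Matrix (Fin 2) (Fin 2) (Polynomial ℝ) :=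
          1 + ∑ j ∈ Finset.Icc 1 q, (Polynomial.X ^ j : Polynomial ℝ) • C2 (Tc j)
       let N : Matrix (Fin 2) (Fin 2) (Polynomial ℝ) :=
          ∑ j ∈ Finset.range (q - r + 1), (Polynomial.X ^ j : Polynomial ℝ) •
            C2 !![(Nc j).1, -(Nc j).2; (Nc j).2, (Nc j).1]
       let D : Matrix (Fin 2) (Fin 2) (Polynomial ℝ) :=
          a • 1 + (Polynomial.X ^ r : Polynomial ℝ) • N
       A * T - T * D - (Polynomial.X ^ (q + 1) : Polynomial ℝ) •
          T.map (fun p => Polynomial.derivative p)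
        = (Polynomial.X ^ (q + 1) : Polynomial ℝ) • E) := by
  intro C2 Jpoly A
  have hJ : matPolyEquiv Jpoly = ∑ j ∈ range (q - r + 1), monomial j (Jc j) :=
    matPolyEquiv_sum_X_pow_smul_map_C _ _
  have hJ0' : (matPolyEquiv Jpoly).coeff 0 = rotScale (𝕒, 𝕓) := by
    simp [hJ, coeff_monomial, hJ0, rotScale]
  obtain ⟨T, N, hTdeg, hNdeg, hT0, hN0, hNrot, hlow⟩ :=
    exists_coeff_mul_sub_mul_eq_zero (matPolyEquiv Jpoly) (Set.range rotScale)
      ⟨0, by ext i j; fin_cases i <;> fin_cases j <;> simp [rotScale]⟩ (hJ0' ▸ ⟨_, rfl⟩)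
      (hJ0' ▸ exists_rotScale_mul_sub_mul_add_eq_rotScale two_ne_zero 𝕒 𝕓 hb) (q - r)
  obtain ⟨E, hEdeg, hE⟩ := exists_conj_sub_X_pow_smul_derivative_eq a Jpoly
    (matPolyEquiv.symm T) (matPolyEquiv.symm N) hrq (hJ ▸ natDegree_sum_range_monomial_le _ _)
    (by simpa using hTdeg.trans (Nat.sub_le q r)) (by simpa using hNdeg) (by simpa using hlow)
  refine ⟨T.coeff, fun k => (N.coeff k 0 0, N.coeff k 1 0), E, by simp only [hN0, hJ0']; rfl,
    hEdeg, ?_⟩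
  intro T' N' D
  have hT' : T' = matPolyEquiv.symm T :=
    (matPolyEquiv_symm_eq_one_add_sum_Icc T (hTdeg.trans (Nat.sub_le q r)) hT0).symm
  have hN' : N' = matPolyEquiv.symm N := by
    rw [matPolyEquiv_symm_eq_sum_range N hNdeg]
    exact sum_congr rfl fun k _ => by rw [← rotScale_eq_of_mem_range (hNrot k)]; rfl
  rw [hT', show D = a • 1 + (X ^ r : ℝ[X]) • matPolyEquiv.symm N by rw [← hN']]
  exact hE

/-- formal diagonalization of the polynomial part (Proposition on
reduction to interlaced final form): there is `T(x) = I + xT₁ + ⋯ + x^q T_q` such that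
`A T - T D - x^{q+1} T' = x^{q+1} E`, where `D = a I + x^r N` with each coefficient of
`N` of the form `aI + bJ` and `N₀ = J₀`. -/
theorem stmt8 (q r : ℕ) (hq : 1 ≤ q) (hr : 0 < r) (hrq : r ≤ q)
    (a : Polynomial ℝ) (ha : a.degree < r)
    (𝕒 𝕓 : ℝ) (hb : 𝕓 ≠ 0)
    (Jc : ℕ → Matrix (Fin 2) (Fin 2) ℝ) (hJ0 : Jc 0 = !![𝕒, -𝕓; 𝕓, 𝕒]) :
    let C2 : Matrix (Fin 2) (Fin 2) ℝ → Matrix (Fin 2) (Fin 2) (Polynomial ℝ) :=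
      fun M => M.map Polynomial.C
    let Jpoly : Matrix (Fin 2) (Fin 2) (Polynomial ℝ) :=
      ∑ j ∈ Finset.range (q - r + 1), (Polynomial.X ^ j : Polynomial ℝ) • C2 (Jc j)
    let A : Matrix (Fin 2) (Fin 2) (Polynomial ℝ) :=
      a • 1 + (Polynomial.X ^ r : Polynomial ℝ) • Jpoly
    ∃ (Tc : ℕ → Matrix (Fin 2) (Fin 2) ℝ) (Nc : ℕ → ℝ × ℝ)
      (E : Matrix (Fin 2) (Fin 2) (Polynomial ℝ)),
      Nc 0 = (𝕒, 𝕓) ∧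
      (∀ i j, (E i j).natDegree ≤ q) ∧
      (let T : Matrix (Fin 2) (Fin 2) (Polynomial ℝ) :=
          1 + ∑ j ∈ Finset.Icc 1 q, (Polynomial.X ^ j : Polynomial ℝ) • C2 (Tc j)
       let N : Matrix (Fin 2) (Fin 2) (Polynomial ℝ) :=
          ∑ j ∈ Finset.range (q - r + 1), (Polynomial.X ^ j : Polynomial ℝ) •
            C2 !![(Nc j).1, -(Nc j).2; (Nc j).2, (Nc j).1]
       let D : Matrix (Fin 2) (Fin 2) (Polynomial ℝ) :=
          a • 1 + (Polynomial.X ^ r : Polynomial ℝ) • N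
       A * T - T * D - (Polynomial.X ^ (q + 1) : Polynomial ℝ) •
          T.map (fun p => Polynomial.derivative p)
        = (Polynomial.X ^ (q + 1) : Polynomial ℝ) • E) :=
  stmt8_general q r hrq a 𝕒 𝕓 hb Jc hJ0
end

section
/- Let $q \ge 1$, let $A \in \mathcal{M}_n(\mathbb{R}[[X]])$ with $A(0)$ invertible, let $G \in \mathbb{R}[[X,Y_1,\dots,Y_n]]^n$, and let $c \in \mathbb{R}[[X]]^n$ with $c(0)=0$. Then there exists a unique $H \in \mathbb{R}[[X]]^n$ with $H(0)=0$ satisfying the formal differential equation $X^{q+1}H'(X) = A(X)H(X) + X^{q+1}G(X,H(X)) + c(X)$. -/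
/-!
Write the equation as the vanishing of the residual `R(H) = A H + X^{q+1} G(X, H) + c - X^{q+1} H'`.
If `K` and `L` agree below order `m`, the `m`-th coefficients of `R(K)` and `R(L)` differ exactly
by `A(0) (K_m - L_m)`: the term `X^{q+1} H'` only sees `H_{m-q}` because `q ≥ 1`, and
`X^{q+1} G(X, H)` only sees coefficients of order at most `m - q - 1`. As `A(0)` is invertible,
the coefficients of a zero of `R` are therefore determined one at a time, which gives existence
and uniqueness. The constant term of the equation reads `A(0) H(0) = -c(0) = 0`, so `H(0) = 0`.
-/

open Classical in
/-- Substitution of one-variable power series (with zero constant term) for the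
variables of a multivariate power series, landing in `ℝ⟦X⟧`. -/
noncomputable def mvSubstP {σ : Type*} [Fintype σ] (a : σ → PowerSeries ℝ)
    (F : MvPowerSeries σ ℝ) : PowerSeries ℝ :=
  PowerSeries.mk fun n =>
    ∑ d ∈ Finset.Iic (Finsupp.equivFunOnFinite.symm fun _ : σ => n),
      MvPowerSeries.coeff d F * PowerSeries.coeff n (∏ s, (a s) ^ (d s))

open PowerSeries

namespace PowerSeries

variable {R : Type*} [CommRing R]

theorem coeff_eq_zero_of_X_pow_dvd {m : ℕ} {f : R⟦X⟧} (h : X ^ (m + 1) ∣ f) : coeff m f = 0 :=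
  X_pow_dvd_iff.mp h m m.lt_succ_self

theorem X_pow_succ_dvd_of_coeff_eq_zero {m : ℕ} {f : R⟦X⟧} (h : X ^ m ∣ f)
    (hm : coeff m f = 0) : X ^ (m + 1) ∣ f := by
  rw [X_pow_dvd_iff] at h ⊢
  intro k hk
  rcases Nat.lt_succ_iff_lt_or_eq.mp hk with hk | rfl
  exacts [h k hk, hm]

theorem eq_zero_of_forall_X_pow_dvd {f : R⟦X⟧} (h : ∀ m, X ^ m ∣ f) : f = 0 :=
  ext fun m => by rw [coeff_eq_zero_of_X_pow_dvd (h (m + 1)), map_zero]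

theorem X_pow_dvd_X_mul_derivative {m : ℕ} {f : R⟦X⟧} (h : X ^ m ∣ f) :
    X ^ m ∣ X * d⁄dX R f := by
  rw [X_pow_dvd_iff] at h ⊢
  rintro (_ | k) hk
  · exact coeff_zero_X_mul _
  · rw [coeff_succ_X_mul, coeff_derivative, h (k + 1) hk, zero_mul]

theorem coeff_mul_of_X_pow_dvd {m : ℕ} (f : R⟦X⟧) {g : R⟦X⟧} (h : X ^ m ∣ g) :
    coeff m (f * g) = constantCoeff f * coeff m g := by
  obtain ⟨e, rfl⟩ := h
  simp [mul_left_comm f, coeff_X_pow_mul']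

end PowerSeries

theorem dvd_prod_pow_sub_prod_pow {R σ : Type*} [CommRing R] (s : Finset σ) {x : R}
    {a b : σ → R} (h : ∀ i, x ∣ a i - b i) (d : σ → ℕ) :
    x ∣ ∏ i ∈ s, a i ^ d i - ∏ i ∈ s, b i ^ d i := by
  have hab : ∀ i, Ideal.Quotient.mk (Ideal.span {x}) (a i) = Ideal.Quotient.mk _ (b i) :=
    fun i => Ideal.Quotient.eq.mpr (Ideal.mem_span_singleton.mpr (h i))
  rw [← Ideal.mem_span_singleton, ← Ideal.Quotient.eq]
  simp only [map_prod, map_pow, hab]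

theorem X_pow_dvd_mvSubstP_sub {σ : Type*} [Fintype σ] {m : ℕ} {a b : σ → ℝ⟦X⟧}
    (h : ∀ s, X ^ m ∣ a s - b s) (F : MvPowerSeries σ ℝ) :
    X ^ m ∣ mvSubstP a F - mvSubstP b F := by
  rw [X_pow_dvd_iff]
  intro k hk
  rw [map_sub, mvSubstP, mvSubstP, coeff_mk, coeff_mk, ← Finset.sum_sub_distrib]
  refine Finset.sum_eq_zero fun d _ => ?_
  rw [← mul_sub, ← map_sub, X_pow_dvd_iff.mp (dvd_prod_pow_sub_prod_pow _ h d) k hk, mul_zero]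

namespace PowerSeries

variable {R ι κ : Type*} [CommRing R]

def IsTriangularWith (Φ : (ι → R⟦X⟧) → κ → R⟦X⟧) (T : (ι → R) ≃+ (κ → R)) : Prop :=
  ∀ m K L, (∀ j, X ^ m ∣ K j - L j) →
    ∀ i, coeff m (Φ K i) - coeff m (Φ L i) = T (fun j => coeff m (K j - L j)) i

variable (Φ : (ι → R⟦X⟧) → κ → R⟦X⟧) (T : (ι → R) ≃+ (κ → R))

noncomputable def triangularSolutionCoeff : ℕ → ι → R
  | m => T.symm fun i =>
    -coeff m (Φ (fun j => mk fun k => if _ : k < m then triangularSolutionCoeff k j else 0) i)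

namespace IsTriangularWith

variable {Φ T}

theorem eq_of_eq_zero (hΦ : IsTriangularWith Φ T) {K L : ι → R⟦X⟧} (hK : Φ K = 0)
    (hL : Φ L = 0) : K = L := by
  have hdvd : ∀ m j, X ^ m ∣ K j - L j := by
    intro m
    induction m with
    | zero => simp
    | succ m ih =>
      have hcoeff : (fun j => coeff m (K j - L j)) = 0 := by
        rw [← map_eq_zero_iff T T.injective]
        funext i
        simpa [hK, hL] using (hΦ m K L ih i).symm
      exact fun j => X_pow_succ_dvd_of_coeff_eq_zero (ih j) (congrFun hcoeff j)
  funext j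
  exact sub_eq_zero.mp (eq_zero_of_forall_X_pow_dvd fun m => hdvd m j)

theorem eq_zero_triangularSolution (hΦ : IsTriangularWith Φ T) :
    Φ (fun j => mk fun m => triangularSolutionCoeff Φ T m j) = 0 := by
  funext i
  ext m
  have ha := triangularSolutionCoeff.eq_1 Φ T m
  simp only [dite_eq_ite] at ha
  set a := triangularSolutionCoeff Φ T
  set P : ι → R⟦X⟧ := fun j => mk fun k => if k < m then a k j else 0
  have hdvd : ∀ j, X ^ m ∣ mk (fun k => a k j) - P j := by
    intro j
    rw [X_pow_dvd_iff]
    intro k hk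
    simp [P, hk]
  have hcoeff : (fun j => coeff m (mk (fun k => a k j) - P j)) = a m := by
    funext j
    simp [P]
  have := hΦ m _ P hdvd i
  rw [hcoeff, ha, AddEquiv.apply_symm_apply] at this
  simpa using this

theorem existsUnique_eq_zero (hΦ : IsTriangularWith Φ T) : ∃! K, Φ K = 0 :=
  ⟨_, hΦ.eq_zero_triangularSolution, fun _ hK => hΦ.eq_of_eq_zero hK
    hΦ.eq_zero_triangularSolution⟩

end IsTriangularWith

end PowerSeries

section FormalODE

open Matrix

variable {ι : Type*} [Fintype ι] (q : ℕ) (A : Matrix ι ι ℝ⟦X⟧)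
  (G : ι → MvPowerSeries (Unit ⊕ ι) ℝ) (c : ι → ℝ⟦X⟧)

noncomputable def odeResidual (H : ι → ℝ⟦X⟧) (i : ι) : ℝ⟦X⟧ :=
  (∑ j, A i j * H j) + X ^ (q + 1) * mvSubstP (Sum.elim (fun _ => X) H) (G i) + c i
    - X ^ (q + 1) * d⁄dX ℝ (H i)

theorem coeff_odeResidual_sub (hq : 1 ≤ q) {m : ℕ} {K L : ι → ℝ⟦X⟧}
    (hKL : ∀ j, X ^ m ∣ K j - L j) (i : ι) :
    coeff m (odeResidual q A G c K i) - coeff m (odeResidual q A G c L i)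
      = (A.map constantCoeff *ᵥ fun j => coeff m (K j - L j)) i := by
  set S := fun H : ι → ℝ⟦X⟧ => mvSubstP (Sum.elim (fun _ => X) H) (G i)
  have hS : X ^ (m + 1) ∣ X ^ (q + 1) * (S K - S L) := by
    rw [pow_succ']
    refine mul_dvd_mul (dvd_pow_self X q.succ_ne_zero) (X_pow_dvd_mvSubstP_sub ?_ _)
    rintro (_ | j)
    exacts [by simp, hKL j]
  have hD : X ^ (m + 1) ∣ X ^ (q + 1) * d⁄dX ℝ (K i - L i) := by
    rw [pow_succ', pow_succ, mul_assoc]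
    exact mul_dvd_mul (dvd_pow_self X (by omega)) (X_pow_dvd_X_mul_derivative (hKL i))
  have hdiff : odeResidual q A G c K i - odeResidual q A G c L i
      = ∑ j, A i j * (K j - L j) + X ^ (q + 1) * (S K - S L)
        - X ^ (q + 1) * d⁄dX ℝ (K i - L i) := by
    simp only [odeResidual, S, map_sub, mul_sub, Finset.sum_sub_distrib]
    ring
  rw [← map_sub, hdiff, map_sub, map_add, coeff_eq_zero_of_X_pow_dvd hS,
    coeff_eq_zero_of_X_pow_dvd hD, map_sum]
  simp only [coeff_mul_of_X_pow_dvd _ (hKL _), mulVec, dotProduct, map_apply, add_zero,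
    sub_zero]

theorem mulVec_constantCoeff_eq_zero (hc : ∀ i, constantCoeff (c i) = 0) {H : ι → ℝ⟦X⟧}
    (hH : odeResidual q A G c H = 0) :
    A.map constantCoeff *ᵥ (fun j => constantCoeff (H j)) = 0 := by
  funext i
  simpa [odeResidual, hc, mulVec, dotProduct] using congrArg constantCoeff (congrFun hH i)

end FormalODE

/-- existence and uniqueness of a formal solution with zero constant term
of the formal ODE `X^{q+1} H' = A H + X^{q+1} G(X,H) + c`. -/
theorem stmt9 (q : ℕ) (hq : 1 ≤ q) (n : ℕ)
    (A : Matrix (Fin n) (Fin n) (PowerSeries ℝ))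
    (hA : (A.map (PowerSeries.constantCoeff (R := ℝ))).det ≠ 0)
    (G : Fin n → MvPowerSeries (Unit ⊕ Fin n) ℝ)
    (c : Fin n → PowerSeries ℝ) (hc : ∀ i, PowerSeries.constantCoeff (c i) = 0) :
    ∃! H : Fin n → PowerSeries ℝ,
      (∀ i, PowerSeries.constantCoeff (H i) = 0) ∧
      ∀ i, (PowerSeries.X : PowerSeries ℝ) ^ (q + 1) * PowerSeries.derivativeFun (H i)
        = (∑ j, A i j * H j)
          + PowerSeries.X ^ (q + 1) *
              mvSubstP (Sum.elim (fun _ => PowerSeries.X) H) (G i)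
          + c i := by
  let A₀ := A.map constantCoeff
  let T := (A₀.toLinearEquiv' (A₀.invertibleOfIsUnitDet hA.isUnit)).toAddEquiv
  have hΦ : IsTriangularWith (odeResidual q A G c) T :=
    fun m K L hKL i => coeff_odeResidual_sub q A G c hq hKL i
  have hsolves : ∀ H : Fin n → ℝ⟦X⟧, odeResidual q A G c H = 0 ↔
      ∀ i, X ^ (q + 1) * d⁄dX ℝ (H i)
        = (∑ j, A i j * H j) + X ^ (q + 1) * mvSubstP (Sum.elim (fun _ => X) H) (G i) + c i :=
    fun H => funext_iff.trans (forall_congr' fun i => sub_eq_zero.trans eq_comm)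
  obtain ⟨H, hH, huniq⟩ := hΦ.existsUnique_eq_zero
  have hH₀ : (fun j => constantCoeff (H j)) = 0 :=
    (map_eq_zero_iff T T.injective).mp (mulVec_constantCoeff_eq_zero q A G c hc hH)
  exact ⟨H, ⟨congrFun hH₀, (hsolves H).mp hH⟩, fun K hK => huniq K ((hsolves K).mpr hK.2)⟩
end

section
/- Let $k \ge 1$, let $F \in \mathbb{C}[[X]]$ be Gevrey of order $1/k$, and let $G \in \mathbb{C}[[X]]$ be a convergent power series with $G(0)=0$ of order $\nu := \mathrm{ord}(G) > 0$. Then the composite series $F \circ G$ is Gevrey of order $1/(\nu k)$. -/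
/-- A power series is Gevrey of order `s` if its coefficients satisfy
`|a_n| ≤ C R^n Γ(ns + 1)`. -/
def Gevrey (s : ℝ) (F : PowerSeries ℂ) : Prop :=
  ∃ C R : ℝ, 0 < C ∧ 0 < R ∧
    ∀ n : ℕ, ‖PowerSeries.coeff n F‖ ≤ C * R ^ n * Real.Gamma (n * s + 1)

/-- A power series is convergent if it converges absolutely on some disc. -/
def PSConvergent (G : PowerSeries ℂ) : Prop :=
  ∃ r : ℝ, 0 < r ∧ Summable fun n : ℕ => ‖PowerSeries.coeff n G‖ * r ^ n

/-- Formal composition `F ∘ G` of one-variable power series, for `G` with zero constant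
term: the `n`-th coefficient only receives contributions from `G^d` with `d ≤ n`. -/
noncomputable def psComp (F G : PowerSeries ℂ) : PowerSeries ℂ :=
  PowerSeries.mk fun n =>
    ∑ d ∈ Finset.range (n + 1), PowerSeries.coeff d F * PowerSeries.coeff n (G ^ d)

/-!
Write `S(r) = ∑ ‖g_m‖ rᵐ < ∞` for the majorant of `G` at a radius `r` where it converges. By
submultiplicativity of this weighted norm, `‖[Xⁿ] Gᵈ‖ ≤ S(r)ᵈ r⁻ⁿ`, and `[Xⁿ] Gᵈ = 0` unless
`ν d ≤ n`. Hence only indices `d ≤ n / ν` of `F` contribute to `[Xⁿ] (F ∘ G)`, and for those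
`Γ(d/k + 1) ≤ 2 Γ(n/(ν k) + 1)`, since `Γ` is increasing on `[2, ∞)`, at most `1` on `[1, 2]`
and at least `1/2` on `[1, ∞)`. Summing the `n + 1` terms only costs a factor `2ⁿ`.
-/

open PowerSeries Finset

namespace Real

lemma Gamma_le_one_of_mem_Icc {x : ℝ} (hx : x ∈ Set.Icc (1 : ℝ) 2) : Gamma x ≤ 1 := by
  simpa [Gamma_one, Gamma_two] using
    convexOn_Gamma.le_max_of_mem_Icc (by norm_num : (1 : ℝ) ∈ Set.Ioi 0) (by norm_num) hx

lemma one_le_Gamma_of_two_le {x : ℝ} (hx : 2 ≤ x) : 1 ≤ Gamma x :=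
  Gamma_two ▸ Gamma_strictMonoOn_Ici.monotoneOn (Set.mem_Ici.2 le_rfl) hx hx

lemma one_half_le_Gamma {x : ℝ} (hx : 1 ≤ x) : 1 / 2 ≤ Gamma x := by
  rcases le_total x 2 with hx2 | hx2
  · have h := one_le_Gamma_of_two_le (by linarith : 2 ≤ x + 1)
    rw [Gamma_add_one (by linarith)] at h
    nlinarith [Gamma_pos_of_pos (by linarith : 0 < x)]
  · linarith [one_le_Gamma_of_two_le hx2]

lemma Gamma_le_two_mul_Gamma {x y : ℝ} (hx : 1 ≤ x) (hxy : x ≤ y) :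
    Gamma x ≤ 2 * Gamma y := by
  rcases le_total x 2 with hx2 | hx2
  · linarith [Gamma_le_one_of_mem_Icc ⟨hx, hx2⟩, one_half_le_Gamma (hx.trans hxy)]
  · have h := Gamma_strictMonoOn_Ici.monotoneOn hx2 (hx2.trans hxy) hxy
    linarith [Gamma_pos_of_pos (by linarith : 0 < y)]

lemma Gamma_le_two_mul_Gamma_of_mul_le {k : ℝ} (hk : 0 < k) {ν d n : ℕ} (hν : 0 < ν)
    (hdn : ν * d ≤ n) : Gamma (d * (1 / k) + 1) ≤ 2 * Gamma (n * (1 / (ν * k)) + 1) := by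
  refine Gamma_le_two_mul_Gamma (le_add_of_nonneg_left (by positivity)) ?_
  rw [add_le_add_iff_right, mul_one_div, mul_one_div, ← div_div,
    div_le_div_iff_of_pos_right hk, le_div_iff₀ (by positivity), mul_comm]
  exact_mod_cast hdn

end Real

namespace PowerSeries

variable {R : Type*}

lemma coeff_pow_eq_zero_of_lt_mul [CommSemiring R] {G : R⟦X⟧} {ν : ℕ}
    (hG : ∀ m < ν, coeff m G = 0) {d n : ℕ} (hn : n < ν * d) : coeff n (G ^ d) = 0 := by
  have h : (X : R⟦X⟧) ^ (ν * d) ∣ G ^ d := by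
    rw [pow_mul]
    exact pow_dvd_pow_of_dvd (X_pow_dvd_iff.2 hG) d
  exact X_pow_dvd_iff.1 h n hn

lemma norm_coeff_pow_mul_pow_le [NormedRing R] [NormOneClass R] {G : R⟦X⟧} {r : ℝ} (hr : 0 ≤ r)
    (hG : Summable fun m ↦ ‖coeff m G‖ * r ^ m) (d n : ℕ) :
    ‖coeff n (G ^ d)‖ * r ^ n ≤ (∑' m, ‖coeff m G‖ * r ^ m) ^ d := by
  set S := ∑' m, ‖coeff m G‖ * r ^ m
  induction d generalizing n with
  | zero => rw [pow_zero, pow_zero, coeff_one]; split_ifs with h <;> simp [h]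
  | succ d ih =>
    calc ‖coeff n (G ^ (d + 1))‖ * r ^ n
        ≤ ∑ p ∈ antidiagonal n, ‖coeff p.1 G‖ * ‖coeff p.2 (G ^ d)‖ * r ^ n := by
          rw [pow_succ', coeff_mul, ← sum_mul]
          gcongr
          exact (norm_sum_le _ _).trans (sum_le_sum fun p _ ↦ norm_mul_le _ _)
      _ = ∑ p ∈ antidiagonal n, ‖coeff p.1 G‖ * r ^ p.1 * (‖coeff p.2 (G ^ d)‖ * r ^ p.2) := by
          refine sum_congr rfl fun p hp ↦ ?_
          rw [← mem_antidiagonal.1 hp, pow_add]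
          ring
      _ ≤ ∑ p ∈ antidiagonal n, ‖coeff p.1 G‖ * r ^ p.1 * S ^ d := by
          gcongr with p
          exact ih p.2
      _ = (∑ m ∈ range (n + 1), ‖coeff m G‖ * r ^ m) * S ^ d := by
          rw [← sum_mul, Nat.sum_antidiagonal_eq_sum_range_succ_mk]
      _ ≤ S * S ^ d := by
          gcongr
          exact hG.sum_le_tsum _ fun m _ ↦ by positivity
      _ = S ^ (d + 1) := (pow_succ' S d).symm

lemma norm_coeff_pow_le [NormedRing R] [NormOneClass R] {G : R⟦X⟧} {r : ℝ} (hr : 0 < r)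
    (hG : Summable fun m ↦ ‖coeff m G‖ * r ^ m) (d n : ℕ) :
    ‖coeff n (G ^ d)‖ ≤ (∑' m, ‖coeff m G‖ * r ^ m) ^ d / r ^ n :=
  (le_div_iff₀ (by positivity)).2 (norm_coeff_pow_mul_pow_le hr.le hG d n)

end PowerSeries

lemma norm_coeff_mul_coeff_pow_le {A : Type*} [NormedCommRing A] [NormOneClass A]
    {F G : A⟦X⟧} {k C R r : ℝ} {ν d n : ℕ} (hk : 0 < k) (hν : 0 < ν) (hC : 0 ≤ C) (hR : 0 ≤ R)
    (hF : ∀ n : ℕ, ‖coeff n F‖ ≤ C * R ^ n * Real.Gamma (n * (1 / k) + 1)) (hr : 0 < r)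
    (hG : Summable fun m ↦ ‖coeff m G‖ * r ^ m) (hlow : ∀ m < ν, coeff m G = 0) (hdn : d ≤ n) :
    ‖coeff d F * coeff n (G ^ d)‖ ≤
      2 * C * (max 1 (R * ∑' m, ‖coeff m G‖ * r ^ m) / r) ^ n *
        Real.Gamma (n * (1 / (ν * k)) + 1) := by
  set S := ∑' m, ‖coeff m G‖ * r ^ m
  set M := max 1 (R * S)
  rcases lt_or_ge n (ν * d) with hlt | hle
  · rw [coeff_pow_eq_zero_of_lt_mul hlow hlt, mul_zero, norm_zero]
    positivity
  calc ‖coeff d F * coeff n (G ^ d)‖ ≤ ‖coeff d F‖ * ‖coeff n (G ^ d)‖ := norm_mul_le _ _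
    _ ≤ C * R ^ d * (2 * Real.Gamma (n * (1 / (ν * k)) + 1)) * (S ^ d / r ^ n) := by
      gcongr
      · exact (hF d).trans (by gcongr; exact Real.Gamma_le_two_mul_Gamma_of_mul_le hk hν hle)
      · exact norm_coeff_pow_le hr hG d n
    _ = 2 * C * ((R * S) ^ d / r ^ n) * Real.Gamma (n * (1 / (ν * k)) + 1) := by ring
    _ ≤ 2 * C * (M ^ n / r ^ n) * Real.Gamma (n * (1 / (ν * k)) + 1) := by
      gcongr
      exact (pow_le_pow_left₀ (by positivity) (le_max_right _ _) d).trans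
        (pow_le_pow_right₀ (le_max_left _ _) hdn)
    _ = 2 * C * (M / r) ^ n * Real.Gamma (n * (1 / (ν * k)) + 1) := by rw [div_pow]

theorem stmt12_general (k : ℝ) (hk : 1 ≤ k) (F G : PowerSeries ℂ)
    (hF : Gevrey (1 / k) F) (hG : PSConvergent G)
    (ν : ℕ) (hνpos : 0 < ν)
    (hlow : ∀ m < ν, PowerSeries.coeff m G = 0) :
    Gevrey (1 / (ν * k)) (psComp F G) := by
  obtain ⟨C, R, hC, hR, hF⟩ := hF
  obtain ⟨r, hr, hG⟩ := hG
  set M := max 1 (R * ∑' m, ‖coeff m G‖ * r ^ m)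
  refine ⟨2 * C, 2 * M / r, by positivity, by positivity, fun n ↦ ?_⟩
  set T := 2 * C * (M / r) ^ n * Real.Gamma (n * (1 / (ν * k)) + 1)
  have hterm : ∀ d ∈ range (n + 1), ‖coeff d F * coeff n (G ^ d)‖ ≤ T := fun d hd ↦
    norm_coeff_mul_coeff_pow_le (by linarith) hνpos hC.le hR.le hF hr hG hlow
      (Nat.lt_succ_iff.1 (mem_range.1 hd))
  calc ‖coeff n (psComp F G)‖ ≤ ∑ d ∈ range (n + 1), ‖coeff d F * coeff n (G ^ d)‖ := by
        rw [psComp, coeff_mk]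
        exact norm_sum_le _ _
    _ ≤ (n + 1) * T := by simpa using sum_le_sum hterm
    _ ≤ 2 ^ n * T := by
        gcongr
        exact_mod_cast Nat.lt_two_pow_self
    _ = 2 * C * (2 * M / r) ^ n * Real.Gamma (n * (1 / (ν * k)) + 1) := by ring

/-- if `F` is Gevrey of order `1/k` and `G` is convergent with `G(0)=0`
of order `ν > 0`, then `F ∘ G` is Gevrey of order `1/(νk)`. -/
theorem stmt12 (k : ℝ) (hk : 1 ≤ k) (F G : PowerSeries ℂ)
    (hF : Gevrey (1 / k) F) (hG : PSConvergent G)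
    (hG0 : PowerSeries.constantCoeff G = 0)
    (ν : ℕ) (hνpos : 0 < ν) (hν : PowerSeries.coeff ν G ≠ 0)
    (hlow : ∀ m < ν, PowerSeries.coeff m G = 0) :
    Gevrey (1 / (ν * k)) (psComp F G) :=
  stmt12_general k hk F G hF hG ν hνpos hlow
end
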